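/- arXiv:2411.19572 — 11 statements merged into one kernel-verified Lean document; each statement's English description precedes it below -/
import Mathlib

section
/- Let C ∈ ℝ^{p×n} have rank s ≥ 1 with rank factorization C = ψ̆ κ̆ᵀ, where ψ̆ ∈ ℝ^{p×s} and κ̆ ∈ ℝ^{n×s} have full column rank s. Let b ∈ ℝ^{p×s} be such that bᵀψ̆ is invertible. Then ψ := ψ̆ (bᵀψ̆)⁻¹ and κ := κ̆ (ψ̆ᵀ b) satisfy κ = Cᵀ b, C = ψ κᵀ and bᵀψ = I_s, and (ψ, κ) is the unique pair of matrices in ℝ^{p×s} × ℝ^{n×s} satisfying the two equations C = ψ κᵀ and bᵀψ = I_s. (Lemma 1(i), identification of the loading matrix.) -/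
open Matrix

lemma aux_isUnit {s : ℕ} (M : Matrix (Fin s) (Fin s) ℝ) (h : M.rank = s) : IsUnit M := by
  have hr : LinearMap.range M.mulVecLin = ⊤ := by
    apply Submodule.eq_top_of_finrank_eq
    rw [← Matrix.rank, h]
    simp
  have : IsUnit M.mulVecLin := by
    rw [show M.mulVecLin = Matrix.toLinAlgEquiv' M from rfl]
    rw [LinearMap.isUnit_iff_range_eq_top]
    exact hr
  have h2 := this.map (Matrix.toLinAlgEquiv' (R := ℝ) (n := Fin s)).symm.toRingEquiv.toRingHom
  simp only [RingEquiv.toRingHom_eq_coe, RingHom.coe_coe, AlgEquiv.toRingEquiv_eq_coe] at h2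
  rwa [show ((Matrix.toLinAlgEquiv' (R := ℝ) (n := Fin s)).symm : _ ≃+* _) M.mulVecLin = M from (Matrix.toLinAlgEquiv' (R := ℝ) (n := Fin s)).symm_apply_apply M] at h2

/-- Lemma 1(i): identification of the loading matrix.  If `C = ψ̆ κ̆ᵀ` is a rank
factorization of the rank-`s` matrix `C` and `bᵀψ̆` is invertible, then
`ψ := ψ̆ (bᵀψ̆)⁻¹` and `κ := κ̆ (ψ̆ᵀ b)` satisfy `κ = Cᵀ b`, `C = ψ κᵀ`, `bᵀψ = 1`,
and `(ψ, κ)` is the unique such pair. -/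
theorem stmt0 {p n s : ℕ} (hs : 1 ≤ s)
    (C : Matrix (Fin p) (Fin n) ℝ) (hC : C.rank = s)
    (ψb : Matrix (Fin p) (Fin s) ℝ) (κb : Matrix (Fin n) (Fin s) ℝ)
    (hfact : C = ψb * κbᵀ) (hψb : ψb.rank = s) (hκb : κb.rank = s)
    (b : Matrix (Fin p) (Fin s) ℝ) (hb : IsUnit (bᵀ * ψb)) :
    κb * (ψbᵀ * b) = Cᵀ * b ∧
    C = (ψb * (bᵀ * ψb)⁻¹) * (κb * (ψbᵀ * b))ᵀ ∧
    bᵀ * (ψb * (bᵀ * ψb)⁻¹) = 1 ∧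
    ∀ (ψ' : Matrix (Fin p) (Fin s) ℝ) (κ' : Matrix (Fin n) (Fin s) ℝ),
      C = ψ' * κ'ᵀ → bᵀ * ψ' = 1 →
      ψ' = ψb * (bᵀ * ψb)⁻¹ ∧ κ' = κb * (ψbᵀ * b) := by
  have hbdet : IsUnit (bᵀ * ψb).det := (Matrix.isUnit_iff_isUnit_det _).mp hb
  have hinv : (bᵀ * ψb) * (bᵀ * ψb)⁻¹ = 1 := Matrix.mul_nonsing_inv _ hbdet
  have hinv' : (bᵀ * ψb)⁻¹ * (bᵀ * ψb) = 1 := Matrix.nonsing_inv_mul _ hbdet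
  have hG : IsUnit (κbᵀ * κb) := aux_isUnit _ (by rw [Matrix.rank_transpose_mul_self, hκb])
  have hGdet : IsUnit (κbᵀ * κb).det := (Matrix.isUnit_iff_isUnit_det _).mp hG
  have h1 : κb * (ψbᵀ * b) = Cᵀ * b := by
    rw [hfact, Matrix.transpose_mul, Matrix.transpose_transpose, Matrix.mul_assoc]
  refine ⟨h1, ?_, ?_, ?_⟩
  · rw [Matrix.transpose_mul, Matrix.transpose_mul, Matrix.transpose_transpose]
    calc C = ψb * κbᵀ := hfact
    _ = ψb * ((bᵀ * ψb)⁻¹ * (bᵀ * ψb)) * κbᵀ := by rw [hinv', Matrix.mul_one]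
    _ = ψb * (bᵀ * ψb)⁻¹ * (bᵀ * ψb * κbᵀ) := by
        simp only [Matrix.mul_assoc]
  · rw [← Matrix.mul_assoc, hinv]
  · intro ψ' κ' hC' hb'
    have hκ'T : κ'ᵀ = (bᵀ * ψb) * κbᵀ := by
      calc κ'ᵀ = 1 * κ'ᵀ := (Matrix.one_mul _).symm
      _ = (bᵀ * ψ') * κ'ᵀ := by rw [hb']
      _ = bᵀ * C := by rw [Matrix.mul_assoc, ← hC']
      _ = (bᵀ * ψb) * κbᵀ := by rw [hfact, Matrix.mul_assoc]
    have hκ' : κ' = κb * (ψbᵀ * b) := by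
      have := congrArg Matrix.transpose hκ'T
      simpa [Matrix.transpose_mul, Matrix.mul_assoc] using this
    refine ⟨?_, hκ'⟩
    have key : ψ' * (bᵀ * ψb) * (κbᵀ * κb) = ψb * (κbᵀ * κb) := by
      have : ψ' * ((bᵀ * ψb) * κbᵀ) = ψb * κbᵀ := by rw [← hκ'T, ← hC', hfact]
      calc ψ' * (bᵀ * ψb) * (κbᵀ * κb) = ψ' * ((bᵀ * ψb) * κbᵀ) * κb := by
            simp only [Matrix.mul_assoc]
      _ = ψb * κbᵀ * κb := by rw [this]
      _ = ψb * (κbᵀ * κb) := by rw [Matrix.mul_assoc]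
    have key2 : ψ' * (bᵀ * ψb) = ψb := by
      have := congrArg (fun M => M * (κbᵀ * κb)⁻¹) key
      simpa [Matrix.mul_assoc, Matrix.mul_nonsing_inv _ hGdet] using this
    calc ψ' = ψ' * (bᵀ * ψb * (bᵀ * ψb)⁻¹) := by rw [hinv, Matrix.mul_one]
    _ = (ψ' * (bᵀ * ψb)) * (bᵀ * ψb)⁻¹ := by simp only [Matrix.mul_assoc]
    _ = ψb * (bᵀ * ψb)⁻¹ := by rw [key2]
end

section
/- Let C ∈ ℝ^{p×n} have rank s with rank factorization C = ψ̆ κ̆ᵀ (ψ̆ ∈ ℝ^{p×s}, κ̆ ∈ ℝ^{n×s} of full column rank s), let r := p − s ≥ 1, let β̆ ∈ ℝ^{p×r} have full column rank with β̆ᵀC = 0, let b ∈ ℝ^{p×s} be such that bᵀψ̆ is invertible, and let c ∈ ℝ^{p×r} have full column rank with cᵀb = 0. Then cᵀβ̆ is invertible, and β := β̆ (cᵀβ̆)⁻¹ is the unique matrix in ℝ^{p×r} satisfying the two equations βᵀC = 0 and cᵀβ = I_r. (Lemma 1(ii), identification of the cointegrating matrix.) -/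
open Matrix

lemma aux_inj {m k : ℕ} (A : Matrix (Fin m) (Fin k) ℝ) (h : A.rank = k) :
    Function.Injective A.mulVecLin := by
  rw [← LinearMap.ker_eq_bot]
  have h1 := LinearMap.finrank_range_add_finrank_ker A.mulVecLin
  unfold Matrix.rank at h
  have h2 : Module.finrank ℝ (Fin k → ℝ) = k := by simp
  have : Module.finrank ℝ (LinearMap.ker A.mulVecLin) = 0 := by omega
  exact Submodule.finrank_eq_zero.mp this

lemma aux_col {a bb k : ℕ} (A : Matrix (Fin a) (Fin bb) ℝ) (B : Matrix (Fin bb) (Fin k) ℝ)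
    (j : Fin k) : A.mulVec (fun i => B i j) = fun i => (A * B) i j := by
  funext i
  simp [Matrix.mulVec, Matrix.mul_apply, dotProduct]

lemma aux_mul_zero {m k l : ℕ} (A : Matrix (Fin m) (Fin k) ℝ) (h : A.rank = k)
    (M : Matrix (Fin k) (Fin l) ℝ) (hM : A * M = 0) : M = 0 := by
  have hinj := aux_inj A h
  funext i j
  have h1 : A.mulVecLin (fun i => M i j) = A.mulVecLin 0 := by
    simp only [Matrix.mulVecLin_apply, Matrix.mulVec_zero, aux_col A M j, hM]
    rfl
  have := hinj h1
  exact congrFun this i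

lemma aux_range_eq_ker {p s r : ℕ} (hp : p = s + r)
    (A : Matrix (Fin p) (Fin s) ℝ) (hA : A.rank = s)
    (B : Matrix (Fin p) (Fin r) ℝ) (hB : B.rank = r)
    (hAB : Aᵀ * B = 0) :
    LinearMap.range B.mulVecLin = LinearMap.ker Aᵀ.mulVecLin := by
  have hle : LinearMap.range B.mulVecLin ≤ LinearMap.ker Aᵀ.mulVecLin := by
    rintro x ⟨v, rfl⟩
    simp only [LinearMap.mem_ker, Matrix.mulVecLin_apply, Matrix.mulVec_mulVec, hAB,
      Matrix.zero_mulVec]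
  apply Submodule.eq_of_le_of_finrank_eq hle
  have h1 := LinearMap.finrank_range_add_finrank_ker Aᵀ.mulVecLin
  have h2 : Module.finrank ℝ (Fin p → ℝ) = p := by simp
  have h3 : Module.finrank ℝ (LinearMap.range Aᵀ.mulVecLin) = s := by
    have ht := Matrix.rank_transpose A
    rw [hA] at ht
    unfold Matrix.rank at ht
    exact ht
  have h4 : Module.finrank ℝ (LinearMap.range B.mulVecLin) = r := by
    unfold Matrix.rank at hB; exact hB
  omega

/-- Lemma 1(ii): identification of the cointegrating matrix. -/
theorem stmt1 {p n s r : ℕ} (hr : 1 ≤ r) (hp : p = s + r)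
    (C : Matrix (Fin p) (Fin n) ℝ) (hC : C.rank = s)
    (ψb : Matrix (Fin p) (Fin s) ℝ) (κb : Matrix (Fin n) (Fin s) ℝ)
    (hfact : C = ψb * κbᵀ) (hψb : ψb.rank = s) (hκb : κb.rank = s)
    (βb : Matrix (Fin p) (Fin r) ℝ) (hβb : βb.rank = r) (hβbC : βbᵀ * C = 0)
    (b : Matrix (Fin p) (Fin s) ℝ) (hb : IsUnit (bᵀ * ψb))
    (c : Matrix (Fin p) (Fin r) ℝ) (hc : c.rank = r) (hcb : cᵀ * b = 0) :
    IsUnit (cᵀ * βb) ∧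
    (βb * (cᵀ * βb)⁻¹)ᵀ * C = 0 ∧
    cᵀ * (βb * (cᵀ * βb)⁻¹) = 1 ∧
    ∀ β' : Matrix (Fin p) (Fin r) ℝ, β'ᵀ * C = 0 → cᵀ * β' = 1 →
      β' = βb * (cᵀ * βb)⁻¹ := by
  -- From X * κbᵀ = 0, deduce X = 0 (κb has full column rank)
  have hkill : ∀ {l : ℕ} (X : Matrix (Fin l) (Fin s) ℝ), X * κbᵀ = 0 → X = 0 := by
    intro l X hX
    have : κb * Xᵀ = 0 := by
      have := congrArg Matrix.transpose hX
      simpa [Matrix.transpose_mul] using this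
    have := aux_mul_zero κb hκb Xᵀ this
    calc X = Xᵀᵀ := (Matrix.transpose_transpose X).symm
    _ = (0 : Matrix (Fin s) (Fin l) ℝ)ᵀ := by rw [this]
    _ = 0 := Matrix.transpose_zero
  -- βbᵀ ψb = 0, hence ψbᵀ βb = 0
  have hβψ : βbᵀ * ψb = 0 := by
    apply hkill
    rw [Matrix.mul_assoc, ← hfact, hβbC]
  have hψβ : ψbᵀ * βb = 0 := by
    have := congrArg Matrix.transpose hβψ
    simpa [Matrix.transpose_mul] using this
  -- rank of b is s
  have hbψrank : (bᵀ * ψb).rank = s := by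
    simpa using Matrix.rank_of_isUnit _ hb
  have hbrank : b.rank = s := by
    have h1 : (bᵀ * ψb).rank ≤ bᵀ.rank := Matrix.rank_mul_le_left bᵀ ψb
    have h2 : bᵀ.rank = b.rank := Matrix.rank_transpose b
    have h3 : b.rank ≤ s := by simpa using Matrix.rank_le_card_width b
    omega
  -- ψbᵀ b is a unit
  have hψb_unit : IsUnit (ψbᵀ * b) := by
    have : (ψbᵀ * b) = (bᵀ * ψb)ᵀ := by simp [Matrix.transpose_mul]
    rw [this, Matrix.isUnit_iff_isUnit_det, Matrix.det_transpose]
    exact hb.map Matrix.detMonoidHom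
  have hψbrank : (ψbᵀ * b).rank = s := by
    simpa using Matrix.rank_of_isUnit _ hψb_unit
  -- kernels and ranges
  have hkerc : LinearMap.range b.mulVecLin = LinearMap.ker cᵀ.mulVecLin :=
    aux_range_eq_ker (by omega) c hc b hbrank hcb
  have hkerψ : LinearMap.range βb.mulVecLin = LinearMap.ker ψbᵀ.mulVecLin :=
    aux_range_eq_ker hp ψb hψb βb hβb hψβ
  -- cᵀ βb is a unit
  have hdet : (cᵀ * βb).det ≠ 0 := by
    intro hdet0
    obtain ⟨v, hvne, hv0⟩ := (Matrix.exists_mulVec_eq_zero_iff).mpr hdet0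
    set y := βb.mulVec v with hy
    have hymem : y ∈ LinearMap.ker cᵀ.mulVecLin := by
      simp only [LinearMap.mem_ker, Matrix.mulVecLin_apply, hy, Matrix.mulVec_mulVec]
      exact hv0
    rw [← hkerc] at hymem
    obtain ⟨u, hu⟩ := hymem
    have hby : b.mulVec u = y := by simpa [Matrix.mulVecLin_apply] using hu
    have hψy : (ψbᵀ * b).mulVec u = 0 := by
      rw [← Matrix.mulVec_mulVec, hby, hy, Matrix.mulVec_mulVec, hψβ, Matrix.zero_mulVec]
    have hu0 : u = 0 := by
      apply aux_inj (ψbᵀ * b) hψbrank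
      rw [Matrix.mulVecLin_apply, Matrix.mulVecLin_apply, Matrix.mulVec_zero, hψy]
    have hy0 : y = 0 := by rw [← hby, hu0, Matrix.mulVec_zero]
    have hv0' : v = 0 := by
      apply aux_inj βb hβb
      rw [Matrix.mulVecLin_apply, Matrix.mulVecLin_apply, Matrix.mulVec_zero, ← hy, hy0]
    exact hvne hv0'
  have hdetu : IsUnit (cᵀ * βb).det := isUnit_iff_ne_zero.mpr hdet
  have hunit : IsUnit (cᵀ * βb) := by
    rw [Matrix.isUnit_iff_isUnit_det]
    exact hdetu
  refine ⟨hunit, ?_, ?_, ?_⟩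
  · rw [Matrix.transpose_mul, Matrix.mul_assoc, hβbC, Matrix.mul_zero]
  · rw [← Matrix.mul_assoc, Matrix.mul_nonsing_inv _ hdetu]
  · intro β' hβ'C hcβ'
    -- β'ᵀ ψb = 0
    have hβ'ψ : β'ᵀ * ψb = 0 := by
      apply hkill
      rw [Matrix.mul_assoc, ← hfact, hβ'C]
    have hψβ' : ψbᵀ * β' = 0 := by
      have := congrArg Matrix.transpose hβ'ψ
      simpa [Matrix.transpose_mul] using this
    -- each column of β' is in range of βb
    have hcols : ∀ j : Fin r, ∃ m : Fin r → ℝ, βb.mulVec m = fun i => β' i j := by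
      intro j
      have hmem : (fun i => β' i j) ∈ LinearMap.ker ψbᵀ.mulVecLin := by
        simp only [LinearMap.mem_ker, Matrix.mulVecLin_apply, aux_col ψbᵀ β' j, hψβ']
        rfl
      rw [← hkerψ] at hmem
      obtain ⟨m, hm⟩ := hmem
      exact ⟨m, hm⟩
    choose m hm using hcols
    set M : Matrix (Fin r) (Fin r) ℝ := Matrix.of (fun k j => m j k) with hM
    have hβ'M : β' = βb * M := by
      funext i j
      have h1 : βb.mulVec (fun k => M k j) = fun i => (βb * M) i j := aux_col βb M j
      have h2 : (fun k => M k j) = m j := rfl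
      rw [h2, hm j] at h1
      exact (congrFun h1 i)
    have hMinv : M = (cᵀ * βb)⁻¹ := by
      have h1 : (cᵀ * βb) * M = 1 := by
        rw [Matrix.mul_assoc, ← hβ'M, hcβ']
      calc M = 1 * M := (Matrix.one_mul M).symm
      _ = ((cᵀ * βb)⁻¹ * (cᵀ * βb)) * M := by rw [Matrix.nonsing_inv_mul _ hdetu]
      _ = (cᵀ * βb)⁻¹ * ((cᵀ * βb) * M) := Matrix.mul_assoc _ _ _
      _ = (cᵀ * βb)⁻¹ * 1 := by rw [h1]
      _ = (cᵀ * βb)⁻¹ := Matrix.mul_one _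
    rw [hβ'M, hMinv]
end

section
/- Let C ∈ ℝ^{p×n} have rank s with rank factorization C = ψ̆ κ̆ᵀ, let r := p − s, let β̆ ∈ ℝ^{p×r} have full column rank with β̆ᵀC = 0, let b ∈ ℝ^{p×s} be such that bᵀψ̆ is invertible, and let c ∈ ℝ^{p×r} have full column rank with cᵀb = 0. Define ψ := ψ̆ (bᵀψ̆)⁻¹ and β := β̆ (cᵀβ̆)⁻¹, and set ψ_* := (cᵀc)⁻¹cᵀψ ∈ ℝ^{r×s} and β_* := (bᵀb)⁻¹bᵀβ ∈ ℝ^{s×r}. Then ψ_* = −β_*ᵀ. (Lemma 1(iii), duality of the unrestricted coefficients.) -/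
open Matrix

lemma aux_isUnit_of_rank {k : ℕ} (M : Matrix (Fin k) (Fin k) ℝ) (h : M.rank = k) :
    IsUnit M := by
  rw [← Matrix.mulVec_surjective_iff_isUnit]
  have htop : LinearMap.range M.mulVecLin = ⊤ := by
    apply Submodule.eq_top_of_finrank_eq
    rw [Matrix.rank] at h
    simp [h]
  intro v
  obtain ⟨w, hw⟩ := LinearMap.range_eq_top.mp htop v
  exact ⟨w, hw⟩

lemma aux_isUnit_gram {m k : ℕ} (A : Matrix (Fin m) (Fin k) ℝ) (h : A.rank = k) :
    IsUnit (Aᵀ * A) :=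
  aux_isUnit_of_rank _ (by rw [Matrix.rank_transpose_mul_self, h])

/-- Lemma 1(iii): duality of the unrestricted coefficients, `ψ_* = −β_*ᵀ`. -/
theorem stmt2 {p n s r : ℕ} (hp : p = s + r)
    (C : Matrix (Fin p) (Fin n) ℝ) (hC : C.rank = s)
    (ψb : Matrix (Fin p) (Fin s) ℝ) (κb : Matrix (Fin n) (Fin s) ℝ)
    (hfact : C = ψb * κbᵀ) (hψb : ψb.rank = s) (hκb : κb.rank = s)
    (βb : Matrix (Fin p) (Fin r) ℝ) (hβb : βb.rank = r) (hβbC : βbᵀ * C = 0)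
    (b : Matrix (Fin p) (Fin s) ℝ) (hb : IsUnit (bᵀ * ψb))
    (c : Matrix (Fin p) (Fin r) ℝ) (hc : c.rank = r) (hcb : cᵀ * b = 0) :
    (cᵀ * c)⁻¹ * cᵀ * (ψb * (bᵀ * ψb)⁻¹) =
      -((bᵀ * b)⁻¹ * bᵀ * (βb * (cᵀ * βb)⁻¹))ᵀ := by
  -- rank of b is s
  have hrb : b.rank = s := by
    refine le_antisymm (Matrix.rank_le_width b) ?_
    calc (s : ℕ) = (bᵀ * ψb).rank := by
          simpa using (Matrix.rank_of_isUnit _ hb).symm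
    _ ≤ bᵀ.rank := Matrix.rank_mul_le_left _ _
    _ = b.rank := Matrix.rank_transpose b
  have hbb : IsUnit (bᵀ * b) := aux_isUnit_gram b hrb
  have hcc : IsUnit (cᵀ * c) := aux_isUnit_gram c hc
  have hκκ : IsUnit (κbᵀ * κb) := aux_isUnit_gram κb hκb
  have hbbd : IsUnit (bᵀ * b).det := (Matrix.isUnit_iff_isUnit_det _).mp hbb
  have hccd : IsUnit (cᵀ * c).det := (Matrix.isUnit_iff_isUnit_det _).mp hcc
  have hbd : IsUnit (bᵀ * ψb).det := (Matrix.isUnit_iff_isUnit_det _).mp hb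
  -- βbᵀ ψb = 0
  have hβψ : βbᵀ * ψb = 0 := by
    have h0 : βbᵀ * ψb * κbᵀ = 0 := by rw [Matrix.mul_assoc, ← hfact, hβbC]
    have h1 : βbᵀ * ψb * (κbᵀ * κb) = 0 := by
      rw [← Matrix.mul_assoc, h0, Matrix.zero_mul]
    calc βbᵀ * ψb = βbᵀ * ψb * ((κbᵀ * κb) * (κbᵀ * κb)⁻¹) := by
          rw [Matrix.mul_nonsing_inv _ ((Matrix.isUnit_iff_isUnit_det _).mp hκκ), Matrix.mul_one]
    _ = βbᵀ * ψb * (κbᵀ * κb) * (κbᵀ * κb)⁻¹ := by simp only [Matrix.mul_assoc]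
    _ = 0 := by rw [h1, Matrix.zero_mul]
  have hbtc : bᵀ * c = 0 := by
    have := congrArg Matrix.transpose hcb
    simpa [Matrix.transpose_mul] using this
  -- projection identity
  have hN : b * ((bᵀ * b)⁻¹ * bᵀ) + c * ((cᵀ * c)⁻¹ * cᵀ) = 1 := by
    have e : Fin p ≃ Fin s ⊕ Fin r := (finCongr hp).trans finSumFinEquiv.symm
    rw [← Matrix.fromCols_mul_fromRows,
      Matrix.fromCols_mul_fromRows_eq_one_comm e,
      Matrix.fromRows_mul_fromCols]
    have h11 : (bᵀ * b)⁻¹ * bᵀ * b = 1 := by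
      rw [Matrix.mul_assoc, Matrix.nonsing_inv_mul _ hbbd]
    have h12 : (bᵀ * b)⁻¹ * bᵀ * c = 0 := by
      rw [Matrix.mul_assoc, hbtc, Matrix.mul_zero]
    have h21 : (cᵀ * c)⁻¹ * cᵀ * b = 0 := by
      rw [Matrix.mul_assoc, hcb, Matrix.mul_zero]
    have h22 : (cᵀ * c)⁻¹ * cᵀ * c = 1 := by
      rw [Matrix.mul_assoc, Matrix.nonsing_inv_mul _ hccd]
    rw [h11, h12, h21, h22, Matrix.fromBlocks_one]
  -- opaque abbreviations
  obtain ⟨U, hUdef⟩ : ∃ U, U = (bᵀ * b)⁻¹ * (bᵀ * ψb) := ⟨_, rfl⟩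
  obtain ⟨V, hVdef⟩ : ∃ V, V = (cᵀ * c)⁻¹ * (cᵀ * ψb) := ⟨_, rfl⟩
  obtain ⟨P, hPdef⟩ : ∃ P, P = βbᵀ * b := ⟨_, rfl⟩
  obtain ⟨Q, hQdef⟩ : ∃ Q, Q = βbᵀ * c := ⟨_, rfl⟩
  have hUi : IsUnit (bᵀ * b)⁻¹ := Matrix.isUnit_nonsing_inv_iff.mpr hbb
  have hU : IsUnit U := by rw [hUdef]; exact hUi.mul hb
  have hUd : IsUnit U.det := (Matrix.isUnit_iff_isUnit_det _).mp hU
  have hdecomp : βbᵀ = P * ((bᵀ * b)⁻¹ * bᵀ) + Q * ((cᵀ * c)⁻¹ * cᵀ) := by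
    rw [hPdef, hQdef]
    calc βbᵀ = βbᵀ * (b * ((bᵀ * b)⁻¹ * bᵀ) + c * ((cᵀ * c)⁻¹ * cᵀ)) := by
          rw [hN, Matrix.mul_one]
    _ = βbᵀ * b * ((bᵀ * b)⁻¹ * bᵀ) + βbᵀ * c * ((cᵀ * c)⁻¹ * cᵀ) := by
          simp only [Matrix.mul_add, Matrix.mul_assoc]
  have he0 : P * U + Q * V = 0 := by
    have h := congrArg (fun X => X * ψb) hdecomp
    simp only [Matrix.add_mul, Matrix.mul_assoc] at h
    rw [hβψ] at h
    rw [hUdef, hVdef]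
    exact h.symm
  have h2 : P * U = -(Q * V) := eq_neg_of_add_eq_zero_left he0
  have hP : P = -(Q * (V * U⁻¹)) := by
    have h3 := congrArg (fun X => X * U⁻¹) h2
    simp only [Matrix.mul_assoc, Matrix.neg_mul] at h3
    rwa [Matrix.mul_nonsing_inv _ hUd, Matrix.mul_one] at h3
  have hK : βbᵀ = Q * (((cᵀ * c)⁻¹ * cᵀ) - V * (U⁻¹ * ((bᵀ * b)⁻¹ * bᵀ))) := by
    rw [hdecomp, hP]
    rw [Matrix.mul_sub]
    simp only [Matrix.neg_mul, Matrix.mul_assoc]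
    abel
  have hQr : Q.rank = r := by
    have hQw : Q.rank ≤ r := by rw [hQdef]; exact Matrix.rank_le_width _
    refine le_antisymm hQw ?_
    calc (r : ℕ) = βb.rank := hβb.symm
    _ = βbᵀ.rank := (Matrix.rank_transpose βb).symm
    _ ≤ Q.rank := by rw [hK]; exact Matrix.rank_mul_le_left _ _
  have hQu : IsUnit Q := aux_isUnit_of_rank Q hQr
  have hcβ : IsUnit (cᵀ * βb) := by
    have ht : Qᵀ = cᵀ * βb := by
      rw [hQdef, Matrix.transpose_mul, Matrix.transpose_transpose]
    rw [← ht]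
    exact (Matrix.isUnit_transpose Q).mpr hQu
  have hcβd : IsUnit (cᵀ * βb).det := (Matrix.isUnit_iff_isUnit_det _).mp hcβ
  -- final computation
  obtain ⟨ψ, hψdef⟩ : ∃ ψ, ψ = ψb * (bᵀ * ψb)⁻¹ := ⟨_, rfl⟩
  obtain ⟨β, hβdef⟩ : ∃ β, β = βb * (cᵀ * βb)⁻¹ := ⟨_, rfl⟩
  have hbψ1 : bᵀ * ψ = 1 := by
    rw [hψdef, ← Matrix.mul_assoc, Matrix.mul_nonsing_inv _ hbd]
  have hcβ1 : cᵀ * β = 1 := by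
    rw [hβdef, ← Matrix.mul_assoc, Matrix.mul_nonsing_inv _ hcβd]
  have hβtc1 : βᵀ * c = 1 := by
    have := congrArg Matrix.transpose hcβ1
    simpa [Matrix.transpose_mul] using this
  have hβtψ : βᵀ * ψ = 0 := by
    rw [hβdef, hψdef, Matrix.transpose_mul]
    calc (cᵀ * βb)⁻¹ᵀ * βbᵀ * (ψb * (bᵀ * ψb)⁻¹)
        = (cᵀ * βb)⁻¹ᵀ * (βbᵀ * ψb * (bᵀ * ψb)⁻¹) := by
          simp only [Matrix.mul_assoc]
    _ = 0 := by rw [hβψ, Matrix.zero_mul, Matrix.mul_zero]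
  have hfin : βᵀ * (b * (bᵀ * b)⁻¹) + (cᵀ * c)⁻¹ * (cᵀ * ψ) = 0 := by
    have h0 : βᵀ * (b * ((bᵀ * b)⁻¹ * (bᵀ * ψ))) + βᵀ * (c * ((cᵀ * c)⁻¹ * (cᵀ * ψ))) = 0 := by
      have h := congrArg (fun X => βᵀ * (X * ψ)) hN
      simp only [Matrix.add_mul, Matrix.mul_add, Matrix.one_mul, Matrix.mul_assoc] at h
      rw [hβtψ] at h
      exact h
    rw [hbψ1, Matrix.mul_one, ← Matrix.mul_assoc βᵀ c, hβtc1, Matrix.one_mul] at h0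
    exact h0
  have hrhs : ((bᵀ * b)⁻¹ * bᵀ * β)ᵀ = βᵀ * (b * (bᵀ * b)⁻¹) := by
    rw [Matrix.transpose_mul, Matrix.transpose_mul, Matrix.transpose_nonsing_inv,
      Matrix.transpose_mul, Matrix.transpose_transpose]
  rw [← hψdef, ← hβdef, Matrix.mul_assoc, hrhs]
  exact eq_neg_of_add_eq_zero_right hfin
end

section
/- Let C ∈ ℝ^{p×n} have rank s with rank factorization C = ψ̆ κ̆ᵀ, let r := p − s, let β̆ ∈ ℝ^{p×r} have full column rank with β̆ᵀC = 0, let b ∈ ℝ^{p×s} be such that bᵀψ̆ is invertible, and let c ∈ ℝ^{p×r} have full column rank with cᵀb = 0. Define ψ := ψ̆ (bᵀψ̆)⁻¹ and β := β̆ (cᵀβ̆)⁻¹. Then for any ψ̃ ∈ ℝ^{p×s} with bᵀψ̃ = I_s one has (cᵀc)⁻¹cᵀ(ψ̃ − ψ) = βᵀ(ψ̃ − ψ), and for any β̃ ∈ ℝ^{p×r} with cᵀβ̃ = I_r one has (bᵀb)⁻¹bᵀ(β̃ − β) = ψᵀ(β̃ − β). (Lemma 1(iv).) -/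
open Matrix

lemma ker_bot_of_rank {p k : ℕ} (A : Matrix (Fin p) (Fin k) ℝ) (h : A.rank = k) :
    LinearMap.ker A.mulVecLin = ⊥ := by
  have h1 := LinearMap.finrank_range_add_finrank_ker A.mulVecLin
  rw [show Module.finrank ℝ (Fin k → ℝ) = k by simp] at h1
  rw [Matrix.rank] at h
  exact Submodule.finrank_eq_zero.mp (by omega)

lemma mulVec_inj_of_rank {p k : ℕ} (A : Matrix (Fin p) (Fin k) ℝ) (h : A.rank = k) :
    Function.Injective A.mulVec := by
  have hk := LinearMap.ker_eq_bot.mp (ker_bot_of_rank A h)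
  intro x y hxy
  exact hk (by simpa [Matrix.mulVecLin_apply] using hxy)

lemma isUnit_of_rank {k : ℕ} (A : Matrix (Fin k) (Fin k) ℝ) (h : A.rank = k) :
    IsUnit A :=
  Matrix.mulVec_injective_iff_isUnit.mp (mulVec_inj_of_rank A h)

lemma isUnit_gram {p k : ℕ} (A : Matrix (Fin p) (Fin k) ℝ) (h : A.rank = k) :
    IsUnit (Aᵀ * A) :=
  isUnit_of_rank _ (by rw [Matrix.rank_transpose_mul_self, h])

lemma mem_range_of_ker {p k m : ℕ} (hp : p = k + m)
    (A : Matrix (Fin p) (Fin k) ℝ) (B : Matrix (Fin p) (Fin m) ℝ)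
    (hA : A.rank = k) (hB : B.rank = m) (hBA : Bᵀ * A = 0)
    (v : Fin p → ℝ) (hv : Bᵀ *ᵥ v = 0) : ∃ u, v = A *ᵥ u := by
  have hle : LinearMap.range A.mulVecLin ≤ LinearMap.ker (Bᵀ).mulVecLin := by
    rintro x ⟨u, rfl⟩
    rw [LinearMap.mem_ker, Matrix.mulVecLin_apply, Matrix.mulVecLin_apply,
      Matrix.mulVec_mulVec, hBA, Matrix.zero_mulVec]
  have h1 := LinearMap.finrank_range_add_finrank_ker (Bᵀ).mulVecLin
  rw [show Module.finrank ℝ (Fin p → ℝ) = p by simp] at h1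
  have hrk : Module.finrank ℝ (LinearMap.range (Bᵀ).mulVecLin) = m := by
    rw [← Matrix.rank, Matrix.rank_transpose, hB]
  have hrA : Module.finrank ℝ (LinearMap.range A.mulVecLin) = k := by
    rw [← Matrix.rank, hA]
  have heq : LinearMap.range A.mulVecLin = LinearMap.ker (Bᵀ).mulVecLin :=
    Submodule.eq_of_le_of_finrank_le hle (by omega)
  have hvmem : v ∈ LinearMap.range A.mulVecLin := by
    rw [heq, LinearMap.mem_ker, Matrix.mulVecLin_apply]; exact hv
  obtain ⟨u, hu⟩ := hvmem
  exact ⟨u, hu.symm⟩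

lemma key {p k m q t : ℕ} (hp : p = k + m)
    (A : Matrix (Fin p) (Fin k) ℝ) (B : Matrix (Fin p) (Fin m) ℝ)
    (hA : A.rank = k) (hB : B.rank = m) (hBA : Bᵀ * A = 0)
    (K : Matrix (Fin q) (Fin p) ℝ) (hKA : K * A = 0)
    (X : Matrix (Fin p) (Fin t) ℝ) (hX : Bᵀ * X = 0) : K * X = 0 := by
  ext i j
  have hcol : Bᵀ *ᵥ (fun a => X a j) = 0 := by
    ext i'
    have := congrFun (congrFun hX i') j
    simpa [Matrix.mul_apply, Matrix.mulVec, dotProduct] using this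
  obtain ⟨u, hu⟩ := mem_range_of_ker hp A B hA hB hBA _ hcol
  have h0 : K *ᵥ (fun a => X a j) = 0 := by
    rw [hu, Matrix.mulVec_mulVec, hKA, Matrix.zero_mulVec]
  have := congrFun h0 i
  simpa [Matrix.mul_apply, Matrix.mulVec, dotProduct] using this

/-- Lemma 1(iv): for any normalized estimators `ψ̃` and `β̃`,
`c̄ᵀ(ψ̃ − ψ) = βᵀ(ψ̃ − ψ)` and `b̄ᵀ(β̃ − β) = ψᵀ(β̃ − β)`. -/
theorem stmt3 {p n s r : ℕ} (hp : p = s + r)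
    (C : Matrix (Fin p) (Fin n) ℝ) (hC : C.rank = s)
    (ψb : Matrix (Fin p) (Fin s) ℝ) (κb : Matrix (Fin n) (Fin s) ℝ)
    (hfact : C = ψb * κbᵀ) (hψb : ψb.rank = s) (hκb : κb.rank = s)
    (βb : Matrix (Fin p) (Fin r) ℝ) (hβb : βb.rank = r) (hβbC : βbᵀ * C = 0)
    (b : Matrix (Fin p) (Fin s) ℝ) (hb : IsUnit (bᵀ * ψb))
    (c : Matrix (Fin p) (Fin r) ℝ) (hc : c.rank = r) (hcb : cᵀ * b = 0) :
    (∀ ψt : Matrix (Fin p) (Fin s) ℝ, bᵀ * ψt = 1 →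
      (cᵀ * c)⁻¹ * cᵀ * (ψt - ψb * (bᵀ * ψb)⁻¹) =
        (βb * (cᵀ * βb)⁻¹)ᵀ * (ψt - ψb * (bᵀ * ψb)⁻¹)) ∧
    (∀ βt : Matrix (Fin p) (Fin r) ℝ, cᵀ * βt = 1 →
      (bᵀ * b)⁻¹ * bᵀ * (βt - βb * (cᵀ * βb)⁻¹) =
        (ψb * (bᵀ * ψb)⁻¹)ᵀ * (βt - βb * (cᵀ * βb)⁻¹)) := by
  have hbdet : IsUnit (bᵀ * ψb).det := (Matrix.isUnit_iff_isUnit_det _).mp hb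
  have hbc : bᵀ * c = 0 := by
    have := congrArg Matrix.transpose hcb
    simpa [Matrix.transpose_mul] using this
  -- rank of b is s
  have hbrank : b.rank = s := by
    have h1 : (bᵀ * ψb).rank = s := by simpa using Matrix.rank_of_isUnit _ hb
    have h2 : (bᵀ * ψb).rank ≤ bᵀ.rank := Matrix.rank_mul_le_left bᵀ ψb
    rw [Matrix.rank_transpose] at h2
    have h3 : b.rank ≤ s := by simpa using Matrix.rank_le_card_width b
    omega
  -- βbᵀ ψb = 0
  have hβψ : βbᵀ * ψb = 0 := by
    have h0 : βbᵀ * ψb * κbᵀ = 0 := by rw [Matrix.mul_assoc, ← hfact, hβbC]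
    have h1 : βbᵀ * ψb * (κbᵀ * κb) = 0 := by
      rw [← Matrix.mul_assoc, h0, Matrix.zero_mul]
    have hκu : IsUnit (κbᵀ * κb).det := (Matrix.isUnit_iff_isUnit_det _).mp (isUnit_gram κb hκb)
    calc βbᵀ * ψb = βbᵀ * ψb * ((κbᵀ * κb) * (κbᵀ * κb)⁻¹) := by
            rw [Matrix.mul_nonsing_inv _ hκu, Matrix.mul_one]
      _ = 0 := by rw [← Matrix.mul_assoc, h1, Matrix.zero_mul]
  have hψβ : ψbᵀ * βb = 0 := by
    have := congrArg Matrix.transpose hβψ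
    simpa [Matrix.transpose_mul] using this
  have hψbu : IsUnit (ψbᵀ * b) := by
    rw [show ψbᵀ * b = (bᵀ * ψb)ᵀ by rw [Matrix.transpose_mul, Matrix.transpose_transpose]]
    exact (Matrix.isUnit_iff_isUnit_det _).mpr (by rw [Matrix.det_transpose]; exact hbdet)
  -- cᵀ βb is a unit
  have hcβ : IsUnit (cᵀ * βb) := by
    apply Matrix.mulVec_injective_iff_isUnit.mp
    intro x y hxy
    have hcv : cᵀ *ᵥ (βb *ᵥ (x - y)) = 0 := by
      rw [Matrix.mulVec_mulVec, Matrix.mulVec_sub, hxy, sub_self]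
    obtain ⟨u, hu⟩ := mem_range_of_ker (by omega) b c hbrank hc hcb _ hcv
    have h1 : ψbᵀ *ᵥ (βb *ᵥ (x - y)) = 0 := by
      rw [Matrix.mulVec_mulVec, hψβ, Matrix.zero_mulVec]
    rw [hu, Matrix.mulVec_mulVec] at h1
    have hu0 : u = 0 := Matrix.mulVec_injective_iff_isUnit.mpr hψbu (by simpa using h1)
    rw [hu0, Matrix.mulVec_zero] at hu
    have hxy0 : x - y = 0 := mulVec_inj_of_rank βb hβb (by simpa using hu)
    exact sub_eq_zero.mp hxy0
  have hcβdet : IsUnit (cᵀ * βb).det := (Matrix.isUnit_iff_isUnit_det _).mp hcβ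
  have hccdet : IsUnit (cᵀ * c).det := (Matrix.isUnit_iff_isUnit_det _).mp (isUnit_gram c hc)
  have hbbdet : IsUnit (bᵀ * b).det := (Matrix.isUnit_iff_isUnit_det _).mp (isUnit_gram b hbrank)
  constructor
  · intro ψt hψt
    set X := ψt - ψb * (bᵀ * ψb)⁻¹ with hXdef
    have hX : bᵀ * X = 0 := by
      rw [hXdef, Matrix.mul_sub, hψt, ← Matrix.mul_assoc, Matrix.mul_nonsing_inv _ hbdet,
        sub_self]
    set K := (cᵀ * c)⁻¹ * cᵀ - (βb * (cᵀ * βb)⁻¹)ᵀ with hKdef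
    have e1 : (βb * (cᵀ * βb)⁻¹)ᵀ * c = 1 := by
      rw [show (βb * (cᵀ * βb)⁻¹)ᵀ * c = (cᵀ * (βb * (cᵀ * βb)⁻¹))ᵀ by
        simp [Matrix.transpose_mul, Matrix.mul_assoc]]
      rw [← Matrix.mul_assoc, Matrix.mul_nonsing_inv _ hcβdet, Matrix.transpose_one]
    have hKc : K * c = 0 := by
      rw [hKdef, Matrix.sub_mul, Matrix.mul_assoc, Matrix.nonsing_inv_mul _ hccdet, e1, sub_self]
    have h0 : K * X = 0 := key (show p = r + s by omega) c b hc hbrank hbc K hKc X hX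
    exact sub_eq_zero.mp (show (cᵀ * c)⁻¹ * cᵀ * X - (βb * (cᵀ * βb)⁻¹)ᵀ * X = 0 from by
      rw [← Matrix.sub_mul]; exact h0)
  · intro βt hβt
    set X := βt - βb * (cᵀ * βb)⁻¹ with hXdef
    have hX : cᵀ * X = 0 := by
      rw [hXdef, Matrix.mul_sub, hβt, ← Matrix.mul_assoc, Matrix.mul_nonsing_inv _ hcβdet,
        sub_self]
    set K := (bᵀ * b)⁻¹ * bᵀ - (ψb * (bᵀ * ψb)⁻¹)ᵀ with hKdef
    have e1 : (ψb * (bᵀ * ψb)⁻¹)ᵀ * b = 1 := by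
      rw [show (ψb * (bᵀ * ψb)⁻¹)ᵀ * b = (bᵀ * (ψb * (bᵀ * ψb)⁻¹))ᵀ by
        simp [Matrix.transpose_mul, Matrix.mul_assoc]]
      rw [← Matrix.mul_assoc, Matrix.mul_nonsing_inv _ hbdet, Matrix.transpose_one]
    have hKb : K * b = 0 := by
      rw [hKdef, Matrix.sub_mul, Matrix.mul_assoc, Matrix.nonsing_inv_mul _ hbbdet, e1, sub_self]
    have h0 : K * X = 0 := key hp b c hbrank hc hcb K hKb X hX
    exact sub_eq_zero.mp (show (bᵀ * b)⁻¹ * bᵀ * X - (ψb * (bᵀ * ψb)⁻¹)ᵀ * X = 0 from by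
      rw [← Matrix.sub_mul]; exact h0)
end

section
/- Suppose C(z) = Σ_{k=0}^∞ C_k z^k, with real p×n coefficient matrices C_k and n ≥ p, satisfies Assumption 1: (i) the series converges for all complex z with |z| < 1 + δ for some δ > 0; (ii) inside the open disc of radius 1 + δ, the set of points z at which rank C(z) < p consists of isolated points, each of which either equals 1 or has modulus strictly greater than 1; and, writing C := C(1), s := rank C, C = ψ̆ κ̆ᵀ a rank factorization, and C₁(z) := (C(z) − C)/(z − 1) (extended analytically at z = 1), (iii) ψ̆_⊥ᵀ C₁(1) κ̆_⊥ has full row rank p − s. Let H ∈ ℝ^{p×m} have full column rank, 1 ≤ m ≤ p. Then G(z) := Hᵀ C(z) satisfies Assumption 1 with m in place of p: the series Σ_{k=0}^∞ Hᵀ C_k z^k converges for |z| < 1 + δ; inside that disc the set of z with rank G(z) < m consists of isolated points each of which equals 1 or has modulus greater than 1; G(1) = Hᵀ C has rank q ≤ s; and for every rank factorization G(1) = ϱ τᵀ (ϱ ∈ ℝ^{m×q}, τ ∈ ℝ^{n×q} of full column rank), the matrix ϱ_⊥ᵀ G₁(1) τ_⊥ has full row rank m − q, where G₁(z) := (G(z)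 − G(1))/(z − 1). (Theorem 1, dimensional coherence.) -/
open Matrix

section helpers
variable {K : Type*} [Field K]

lemma myrank_eq_of_inj {a b : ℕ} (M : Matrix (Fin a) (Fin b) K)
    (h : Function.Injective M.mulVecLin) : M.rank = b := by
  rw [Matrix.rank, LinearMap.finrank_range_of_inj h, Module.finrank_fin_fun]

lemma myinj_of_rank_eq {a b : ℕ} (M : Matrix (Fin a) (Fin b) K)
    (h : M.rank = b) : Function.Injective M.mulVecLin := by
  rw [← LinearMap.ker_eq_bot]
  rw [Matrix.rank] at h
  have h2 := LinearMap.finrank_range_add_finrank_ker M.mulVecLin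
  rw [h, Module.finrank_fin_fun] at h2
  have : Module.finrank K (LinearMap.ker M.mulVecLin) = 0 := by omega
  exact Submodule.finrank_eq_zero.mp this

lemma mymulVec_inj {a b : ℕ} (M : Matrix (Fin a) (Fin b) K)
    (h : M.rank = b) {v : Fin b → K} (hv : M *ᵥ v = 0) : v = 0 := by
  have := myinj_of_rank_eq M h
  have h0 : M.mulVecLin v = M.mulVecLin 0 := by
    simp [Matrix.mulVecLin_apply, hv]
  exact this h0

lemma myleftker {a b : ℕ} (M : Matrix (Fin a) (Fin b) K) (h : M.rank = a)
    {v : Fin a → K} (hv : v ᵥ* M = 0) : v = 0 := by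
  apply mymulVec_inj Mᵀ (by rw [Matrix.rank_transpose]; exact h)
  rw [Matrix.mulVec_transpose]; exact hv

lemma myrank_of_leftker {a b : ℕ} (M : Matrix (Fin a) (Fin b) K)
    (h : ∀ v : Fin a → K, v ᵥ* M = 0 → v = 0) : M.rank = a := by
  rw [← Matrix.rank_transpose]
  apply myrank_eq_of_inj
  rw [← LinearMap.ker_eq_bot, Submodule.eq_bot_iff]
  intro v hv
  apply h
  have hv' : Mᵀ *ᵥ v = 0 := hv
  rw [Matrix.mulVec_transpose] at hv'
  exact hv'

/-- a real full-column-rank matrix stays full column rank after `map ofReal`. -/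
lemma mymap_rank {a b : ℕ} (A : Matrix (Fin a) (Fin b) ℝ) (h : A.rank = b) :
    (A.map Complex.ofReal).rank = b := by
  have h1 : (Aᵀ * A).rank = b := by rw [Matrix.rank_transpose_mul_self]; exact h
  have hdet : (Aᵀ * A).det ≠ 0 := by
    intro hd
    obtain ⟨v, hv, hMv⟩ := (Matrix.exists_mulVec_eq_zero_iff).mpr hd
    exact hv (mymulVec_inj _ h1 hMv)
  have hdetC : ((Aᵀ * A).map Complex.ofReal).det ≠ 0 := by
    have hd : ((Aᵀ * A).map Complex.ofReal).det = Complex.ofReal ((Aᵀ * A).det) :=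
      (RingHom.map_det Complex.ofRealHom (Aᵀ * A)).symm
    rw [hd]
    simpa using hdet
  apply myrank_eq_of_inj
  rw [← LinearMap.ker_eq_bot, Submodule.eq_bot_iff]
  intro v hv
  have hv' : (A.map Complex.ofReal) *ᵥ v = 0 := hv
  have h2 : ((Aᵀ * A).map Complex.ofReal) *ᵥ v = 0 := by
    have : (Aᵀ * A).map Complex.ofReal = (Aᵀ.map Complex.ofReal) * (A.map Complex.ofReal) :=
      Matrix.map_mul (f := Complex.ofRealHom)
    rw [this, ← Matrix.mulVec_mulVec, hv', Matrix.mulVec_zero]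
  by_contra hvne
  exact hdetC ((Matrix.exists_mulVec_eq_zero_iff).mp ⟨v, hvne, h2⟩)

lemma mymap_mul {a b c : ℕ} (A : Matrix (Fin a) (Fin b) ℝ) (B : Matrix (Fin b) (Fin c) ℝ) :
    (A * B).map Complex.ofReal = (A.map Complex.ofReal) * (B.map Complex.ofReal) :=
  Matrix.map_mul (f := Complex.ofRealHom)

/-- `ker (Aᵀ) = range (Aperp)` over ℂ, membership version. -/
lemma myker_range {a r c : ℕ} (A : Matrix (Fin a) (Fin r) ℝ)
    (Aperp : Matrix (Fin a) (Fin c) ℝ)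
    (hA : A.rank = r) (hperp : Aᵀ * Aperp = 0) (hperpr : Aperp.rank = c) (hrc : r + c = a)
    {v : Fin a → ℂ} (hv : (Aᵀ.map Complex.ofReal) *ᵥ v = 0) :
    ∃ y : Fin c → ℂ, (Aperp.map Complex.ofReal) *ᵥ y = v := by
  have hsub : LinearMap.range (Aperp.map Complex.ofReal).mulVecLin ≤
      LinearMap.ker (Aᵀ.map Complex.ofReal).mulVecLin := by
    rintro x ⟨y, rfl⟩
    simp only [LinearMap.mem_ker, Matrix.mulVecLin_apply, Matrix.mulVec_mulVec]
    rw [← mymap_mul, hperp]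
    simp
  have hr1 : Module.finrank ℂ (LinearMap.range (Aperp.map Complex.ofReal).mulVecLin) = c := by
    have := mymap_rank Aperp hperpr
    rwa [Matrix.rank] at this
  have hr2 : Module.finrank ℂ (LinearMap.range (Aᵀ.map Complex.ofReal).mulVecLin) = r := by
    have h3 : (Aᵀ.map Complex.ofReal).rank = r := by
      rw [Matrix.transpose_map, Matrix.rank_transpose]
      exact mymap_rank A hA
    rwa [Matrix.rank] at h3
  have h2 := LinearMap.finrank_range_add_finrank_ker (Aᵀ.map Complex.ofReal).mulVecLin
  rw [hr2, Module.finrank_fin_fun] at h2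
  have heq : LinearMap.range (Aperp.map Complex.ofReal).mulVecLin =
      LinearMap.ker (Aᵀ.map Complex.ofReal).mulVecLin := by
    apply Submodule.eq_of_le_of_finrank_le hsub
    rw [hr1]; omega
  have hvmem : v ∈ LinearMap.range (Aperp.map Complex.ofReal).mulVecLin := by
    rw [heq]; exact hv
  obtain ⟨y, hy⟩ := hvmem
  exact ⟨y, hy⟩

end helpers

/-- Theorem 1 (dimensional coherence): if `C(z) = Σ Cₖ zᵏ` satisfies Assumption 1,
then for any full column rank `H`, `G(z) := Hᵀ C(z)` also satisfies Assumption 1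
(with `m` in place of `p`). -/
theorem stmt4 {p n m : ℕ} (hpn : p ≤ n) (hm : 1 ≤ m) (hmp : m ≤ p)
    (Ck : ℕ → Matrix (Fin p) (Fin n) ℝ) (δ : ℝ) (hδ : 0 < δ)
    (Cfun : ℂ → Matrix (Fin p) (Fin n) ℂ)
    -- Assumption 1(i): the series converges on the disc of radius `1 + δ`
    (hconv : ∀ z : ℂ, ‖z‖ < 1 + δ → ∀ i j,
      Summable fun k : ℕ => (Ck k i j : ℂ) * z ^ k)
    (hCfun : ∀ z : ℂ, ‖z‖ < 1 + δ → ∀ i j,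
      Cfun z i j = ∑' k : ℕ, (Ck k i j : ℂ) * z ^ k)
    -- Assumption 1(ii): `rank C(z) < p` only at isolated points `z = 1` or `|z| > 1`
    (hiso : ∀ z : ℂ, ‖z‖ < 1 + δ → (Cfun z).rank < p →
      (z = 1 ∨ 1 < ‖z‖) ∧
        ∃ ε > 0, ∀ w : ℂ, ‖w - z‖ < ε → ‖w‖ < 1 + δ → (Cfun w).rank < p → w = z)
    -- rank factorization `C(1) = ψ̆ κ̆ᵀ` of rank `s`
    (s : ℕ)
    (ψb : Matrix (Fin p) (Fin s) ℝ) (κb : Matrix (Fin n) (Fin s) ℝ)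
    (hfact : Cfun 1 = (ψb * κbᵀ).map Complex.ofReal)
    (hψb : ψb.rank = s) (hκb : κb.rank = s) (hCrank : (Cfun 1).rank = s)
    -- `C₁(z) = (C(z) − C(1))/(z − 1)`, extended analytically at `z = 1`
    (C1fun : ℂ → Matrix (Fin p) (Fin n) ℂ)
    (hC1 : ∀ z : ℂ, ‖z‖ < 1 + δ → z ≠ 1 →
      C1fun z = (z - 1)⁻¹ • (Cfun z - Cfun 1))
    (hC1an : ∀ i j, AnalyticAt ℂ (fun z => C1fun z i j) 1)
    -- Assumption 1(iii): `ψ̆⊥ᵀ C₁(1) κ̆⊥` has full row rank `p − s`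
    (ψperp : Matrix (Fin p) (Fin (p - s)) ℝ)
    (hψperp : ψbᵀ * ψperp = 0) (hψperpr : ψperp.rank = p - s)
    (κperp : Matrix (Fin n) (Fin (n - s)) ℝ)
    (hκperp : κbᵀ * κperp = 0) (hκperpr : κperp.rank = n - s)
    (hiii : ((ψperpᵀ.map Complex.ofReal) * C1fun 1 *
      (κperp.map Complex.ofReal)).rank = p - s)
    -- `H` of full column rank
    (H : Matrix (Fin p) (Fin m) ℝ) (hH : H.rank = m) :
    -- conclusion (i): the series `Σ Hᵀ Cₖ zᵏ` converges and sums to `G(z) = Hᵀ C(z)`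
    (∀ z : ℂ, ‖z‖ < 1 + δ → ∀ i j,
      Summable fun k : ℕ => ((Hᵀ * Ck k) i j : ℂ) * z ^ k) ∧
    (∀ z : ℂ, ‖z‖ < 1 + δ → ∀ i j,
      ((Hᵀ.map Complex.ofReal) * Cfun z) i j =
        ∑' k : ℕ, ((Hᵀ * Ck k) i j : ℂ) * z ^ k) ∧
    -- conclusion (ii): `rank G(z) < m` only at isolated points `z = 1` or `|z| > 1`
    (∀ z : ℂ, ‖z‖ < 1 + δ → ((Hᵀ.map Complex.ofReal) * Cfun z).rank < m →
      (z = 1 ∨ 1 < ‖z‖) ∧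
        ∃ ε > 0, ∀ w : ℂ, ‖w - z‖ < ε → ‖w‖ < 1 + δ →
          ((Hᵀ.map Complex.ofReal) * Cfun w).rank < m → w = z) ∧
    -- `G(1) = Hᵀ C(1)` has rank `q ≤ s`
    ((Hᵀ.map Complex.ofReal) * Cfun 1).rank ≤ s ∧
    -- conclusion (iii): for every rank factorization `G(1) = ϱ τᵀ`,
    -- `ϱ⊥ᵀ G₁(1) τ⊥` has full row rank `m − q`, where `G₁(1) = Hᵀ C₁(1)`
    (∀ q : ℕ, ((Hᵀ.map Complex.ofReal) * Cfun 1).rank = q →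
      ∀ (ϱ : Matrix (Fin m) (Fin q) ℝ) (τ : Matrix (Fin n) (Fin q) ℝ),
        (Hᵀ.map Complex.ofReal) * Cfun 1 = (ϱ * τᵀ).map Complex.ofReal →
        ϱ.rank = q → τ.rank = q →
        ∀ (ϱperp : Matrix (Fin m) (Fin (m - q)) ℝ)
          (τperp : Matrix (Fin n) (Fin (n - q)) ℝ),
          ϱᵀ * ϱperp = 0 → ϱperp.rank = m - q →
          τᵀ * τperp = 0 → τperp.rank = n - q →
          ((ϱperpᵀ.map Complex.ofReal) * ((Hᵀ.map Complex.ofReal) * C1fun 1) *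
            (τperp.map Complex.ofReal)).rank = m - q) := by
  -- expand entries of `Hᵀ * Ck k`
  have hentry : ∀ (k : ℕ) (z : ℂ) (i : Fin m) (j : Fin n),
      ((Hᵀ * Ck k) i j : ℂ) * z ^ k = ∑ l, (H l i : ℂ) * ((Ck k l j : ℂ) * z ^ k) := by
    intro k z i j
    simp only [Matrix.mul_apply, Matrix.transpose_apply]
    push_cast
    rw [Finset.sum_mul]
    exact Finset.sum_congr rfl fun l _ => mul_assoc _ _ _
  have hsum : ∀ z : ℂ, ‖z‖ < 1 + δ → ∀ (i : Fin m) (j : Fin n),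
      Summable fun k : ℕ => ((Hᵀ * Ck k) i j : ℂ) * z ^ k := by
    intro z hz i j
    have he : (fun k : ℕ => ((Hᵀ * Ck k) i j : ℂ) * z ^ k)
        = fun k => ∑ l, (H l i : ℂ) * ((Ck k l j : ℂ) * z ^ k) := by
      funext k; exact hentry k z i j
    rw [he]
    exact summable_sum fun l _ => (hconv z hz l j).mul_left _
  refine ⟨hsum, ?_, ?_, ?_, ?_⟩
  · -- (i) tsum identity
    intro z hz i j
    have hmm : ((Hᵀ.map Complex.ofReal) * Cfun z) i j = ∑ l, (H l i : ℂ) * Cfun z l j := by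
      simp [Matrix.mul_apply, Matrix.transpose_apply, Matrix.map_apply]
    rw [hmm]
    calc ∑ l, (H l i : ℂ) * Cfun z l j
        = ∑ l, ∑' k : ℕ, (H l i : ℂ) * ((Ck k l j : ℂ) * z ^ k) := by
          refine Finset.sum_congr rfl fun l _ => ?_
          rw [hCfun z hz l j, tsum_mul_left]
      _ = ∑' k : ℕ, ∑ l, (H l i : ℂ) * ((Ck k l j : ℂ) * z ^ k) :=
          (Summable.tsum_finsetSum fun l _ => (hconv z hz l j).mul_left _).symm
      _ = ∑' k : ℕ, ((Hᵀ * Ck k) i j : ℂ) * z ^ k := by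
          exact tsum_congr fun k => (hentry k z i j).symm
  · -- (ii) isolation
    have hrankG : ∀ (C : Matrix (Fin p) (Fin n) ℂ), C.rank = p →
        ((Hᵀ.map Complex.ofReal) * C).rank = m := by
      intro C hC
      apply myrank_of_leftker
      intro v hv
      have h1 : (v ᵥ* (Hᵀ.map Complex.ofReal)) ᵥ* C = 0 := by
        rw [Matrix.vecMul_vecMul]; exact hv
      have h2 : v ᵥ* (Hᵀ.map Complex.ofReal) = 0 := myleftker C hC h1
      have h3 : (H.map Complex.ofReal) *ᵥ v = 0 := by
        rw [← Matrix.vecMul_transpose, ← Matrix.transpose_map]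
        exact h2
      exact mymulVec_inj _ (mymap_rank H hH) h3
    have hdrop : ∀ w : ℂ, ((Hᵀ.map Complex.ofReal) * Cfun w).rank < m → (Cfun w).rank < p := by
      intro w hw
      by_contra hcp
      have hle : (Cfun w).rank ≤ p := by
        simpa using Matrix.rank_le_card_height (Cfun w)
      have : (Cfun w).rank = p := le_antisymm hle (not_lt.mp hcp)
      rw [hrankG _ this] at hw
      exact lt_irrefl m hw
    intro z hz hzr
    obtain ⟨h1, ε, hε, hweq⟩ := hiso z hz (hdrop z hzr)
    exact ⟨h1, ε, hε, fun w hw1 hw2 hw3 => hweq w hw1 hw2 (hdrop w hw3)⟩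
  · -- rank G(1) ≤ s
    calc ((Hᵀ.map Complex.ofReal) * Cfun 1).rank ≤ (Cfun 1).rank :=
          Matrix.rank_mul_le_right _ _
      _ = s := hCrank
  · -- (iii)
    intro q hq ϱ τ hfactG hϱ hτ ϱperp τperp hϱperp hϱperpr hτperp hτperpr
    have hsp : s ≤ p := by
      have := Matrix.rank_le_card_height ψb
      simp only [Fintype.card_fin] at this
      rw [hψb] at this; exact this
    have hqn : q ≤ n := by
      have := Matrix.rank_le_card_height τ
      simp only [Fintype.card_fin] at this
      rw [hτ] at this; exact this
    -- real factor identity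
    have hreal : Hᵀ * (ψb * κbᵀ) = ϱ * τᵀ := by
      have hC : (Hᵀ * (ψb * κbᵀ)).map Complex.ofReal = (ϱ * τᵀ).map Complex.ofReal := by
        rw [mymap_mul, ← hfact, hfactG]
      ext i j
      have := congrFun (congrFun hC i) j
      simpa [Matrix.map_apply] using this
    -- τᵀ κperp = 0
    have hτκ : τᵀ * κperp = 0 := by
      have h1 : ϱ * (τᵀ * κperp) = 0 := by
        rw [← Matrix.mul_assoc, ← hreal, Matrix.mul_assoc, Matrix.mul_assoc, hκperp,
          Matrix.mul_zero, Matrix.mul_zero]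
      ext i j
      have hcol : ϱ *ᵥ (fun k => (τᵀ * κperp) k j) = 0 := by
        funext i'
        have := congrFun (congrFun h1 i') j
        simpa [Matrix.mul_apply, Matrix.mulVec, dotProduct] using this
      have := congrFun (mymulVec_inj ϱ hϱ hcol) i
      simpa using this
    -- main left-kernel argument over ℂ
    apply myrank_of_leftker
    intro x hx
    simp only [← Matrix.vecMul_vecMul] at hx
    set a : Fin m → ℂ := x ᵥ* (ϱperpᵀ.map Complex.ofReal) with ha
    set h : Fin p → ℂ := a ᵥ* (Hᵀ.map Complex.ofReal) with hh
    have huτ : (h ᵥ* C1fun 1) ᵥ* (τperp.map Complex.ofReal) = 0 := hx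
    -- h ᵥ* Cfun 1 = 0
    have haϱ : a ᵥ* (ϱ.map Complex.ofReal) = 0 := by
      rw [ha, Matrix.vecMul_vecMul, ← mymap_mul]
      have : ϱperpᵀ * ϱ = 0 := by
        have := congrArg Matrix.transpose hϱperp
        simpa [Matrix.transpose_mul] using this
      rw [this]
      simp [Matrix.vecMul_zero]
    have hhC : h ᵥ* Cfun 1 = 0 := by
      rw [hh, Matrix.vecMul_vecMul, hfactG, mymap_mul, ← Matrix.vecMul_vecMul, haϱ,
        Matrix.zero_vecMul]
    -- h ᵥ* ψ.map = 0, hence h ∈ range ψperp.map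
    have hhψ : h ᵥ* (ψb.map Complex.ofReal) = 0 := by
      have h1 : (h ᵥ* (ψb.map Complex.ofReal)) ᵥ* (κbᵀ.map Complex.ofReal) = 0 := by
        rw [Matrix.vecMul_vecMul, ← mymap_mul, ← hfact]
        exact hhC
      have h2 : (κb.map Complex.ofReal) *ᵥ (h ᵥ* (ψb.map Complex.ofReal)) = 0 := by
        rw [Matrix.transpose_map, Matrix.vecMul_transpose] at h1
        exact h1
      exact mymulVec_inj _ (mymap_rank κb hκb) h2
    have hψh : (ψbᵀ.map Complex.ofReal) *ᵥ h = 0 := by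
      rw [Matrix.transpose_map, Matrix.mulVec_transpose]
      exact hhψ
    obtain ⟨y, hy⟩ := myker_range ψb ψperp hψb hψperp hψperpr (by omega) hψh
    -- hence annihilates κperp.map
    have huκ : (h ᵥ* C1fun 1) ᵥ* (κperp.map Complex.ofReal) = 0 := by
      funext j
      have hcol : (τᵀ.map Complex.ofReal) *ᵥ (fun i => (κperp.map Complex.ofReal) i j) = 0 := by
        funext i'
        have h0 : (τᵀ * κperp) i' j = 0 := by rw [hτκ]; rfl
        have : ((τᵀ * κperp).map Complex.ofReal) i' j = 0 := by
          simp [Matrix.map_apply, h0]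
        rw [mymap_mul] at this
        simpa [Matrix.mul_apply, Matrix.mulVec, dotProduct, Matrix.map_apply] using this
      obtain ⟨sj, hsj⟩ := myker_range τ τperp hτ hτperp hτperpr (by omega) hcol
      have : ((h ᵥ* C1fun 1) ᵥ* (κperp.map Complex.ofReal)) j
          = (h ᵥ* C1fun 1) ⬝ᵥ ((τperp.map Complex.ofReal) *ᵥ sj) := by
        rw [hsj]
        simp [Matrix.vecMul, dotProduct]
      rw [this, Matrix.dotProduct_mulVec, huτ]
      simp
    -- y kills the full-row-rank matrix of (iii)
    have hy0 : y ᵥ* ((ψperpᵀ.map Complex.ofReal) * C1fun 1 * (κperp.map Complex.ofReal)) = 0 := by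
      rw [← Matrix.vecMul_vecMul, ← Matrix.vecMul_vecMul]
      have hyψ : y ᵥ* (ψperpᵀ.map Complex.ofReal) = h := by
        rw [Matrix.transpose_map, Matrix.vecMul_transpose]
        exact hy
      rw [hyψ]
      exact huκ
    have hyz : y = 0 := myleftker _ hiii hy0
    have hhz : h = 0 := by rw [← hy, hyz, Matrix.mulVec_zero]
    have haz : a = 0 := by
      have h3 : (H.map Complex.ofReal) *ᵥ a = 0 := by
        rw [← Matrix.vecMul_transpose, ← Matrix.transpose_map, ← hh]
        exact hhz
      exact mymulVec_inj _ (mymap_rank H hH) h3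
    have hxz : (ϱperp.map Complex.ofReal) *ᵥ x = 0 := by
      rw [← Matrix.vecMul_transpose, ← Matrix.transpose_map, ← ha]
      exact haz
    exact mymulVec_inj _ (mymap_rank ϱperp hϱperpr) hxz
end

section
/- Let 1 ≤ s ≤ p ≤ n and m ≤ p. Let ψ ∈ ℝ^{p×s} and κ ∈ ℝ^{n×s} have full column rank, let C₁ ∈ ℝ^{p×n} be such that ψ_⊥ᵀ C₁ κ_⊥ has full row rank p − s, and let H ∈ ℝ^{p×m} have full column rank. Let Hᵀψ = ϱ ϑᵀ be a rank factorization with ϱ ∈ ℝ^{m×q} and ϑ ∈ ℝ^{s×q} of full column rank q, and set τ := κ ϑ ∈ ℝ^{n×q}. Then the (m−q)×(n−q) matrix ϱ_⊥ᵀ Hᵀ C₁ τ_⊥ has full row rank m − q. (Linear-algebra core of the proof of Theorem 1.) -/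
open Matrix Module

private lemma rank_add_ker {a b : ℕ} (A : Matrix (Fin a) (Fin b) ℝ) :
    A.rank + finrank ℝ (LinearMap.ker A.mulVecLin) = b := by
  rw [Matrix.rank]
  simpa [Module.finrank_fin_fun] using LinearMap.finrank_range_add_finrank_ker A.mulVecLin

private lemma ker_eq_bot_of_rank {a b : ℕ} (A : Matrix (Fin a) (Fin b) ℝ) (h : A.rank = b) :
    LinearMap.ker A.mulVecLin = ⊥ := by
  have h2 := rank_add_ker A
  rw [h] at h2
  have h3 : finrank ℝ (LinearMap.ker A.mulVecLin) = 0 := by omega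
  exact Submodule.finrank_eq_zero.mp h3

private lemma mulVec_inj {a b : ℕ} (A : Matrix (Fin a) (Fin b) ℝ) (h : A.rank = b)
    {x : Fin b → ℝ} (hx : A *ᵥ x = 0) : x = 0 := by
  have hk := ker_eq_bot_of_rank A h
  have hmem : x ∈ LinearMap.ker A.mulVecLin := by
    simpa [Matrix.mulVecLin_apply] using hx
  rw [hk] at hmem
  simpa using hmem

private lemma rank_of_ker_eq_bot {a b : ℕ} (A : Matrix (Fin a) (Fin b) ℝ)
    (h : LinearMap.ker A.mulVecLin = ⊥) : A.rank = b := by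
  have h2 := rank_add_ker A
  rw [h] at h2
  simpa using h2

private lemma range_eq_ker {a b c : ℕ}
    (B : Matrix (Fin a) (Fin b) ℝ) (A : Matrix (Fin a) (Fin c) ℝ)
    (hBA : Bᵀ * A = 0) (hB : B.rank = b) (hA : A.rank = a - b) (hba : b ≤ a) :
    LinearMap.range A.mulVecLin = LinearMap.ker Bᵀ.mulVecLin := by
  apply Submodule.eq_of_le_of_finrank_eq
  · rintro x ⟨y, rfl⟩
    have h1 : Bᵀ.mulVecLin (A.mulVecLin y) = (Bᵀ * A).mulVecLin y := by
      rw [Matrix.mulVecLin_mul]; rfl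
    rw [LinearMap.mem_ker, h1, hBA]
    simp
  · have h1 : finrank ℝ (LinearMap.range A.mulVecLin) = a - b := hA
    have h2 := rank_add_ker Bᵀ
    have h3 : Bᵀ.rank = b := by rw [Matrix.rank_transpose, hB]
    rw [h3] at h2
    omega

private lemma transpose_mulVec_eq_zero {a b c : ℕ}
    (A : Matrix (Fin a) (Fin b) ℝ) (B : Matrix (Fin a) (Fin c) ℝ)
    (hr : LinearMap.range A.mulVecLin ≤ LinearMap.range B.mulVecLin)
    {y : Fin a → ℝ} (hy : Bᵀ *ᵥ y = 0) : Aᵀ *ᵥ y = 0 := by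
  funext i
  have hcol : (fun j => A j i) ∈ LinearMap.range A.mulVecLin := by
    refine ⟨Pi.single i 1, ?_⟩
    funext j
    simp [Matrix.mulVecLin_apply, Matrix.mulVec_single]
  obtain ⟨cv, hcv⟩ := hr hcol
  have h1 : (Aᵀ *ᵥ y) i = (fun j => A j i) ⬝ᵥ y := by
    simp [Matrix.mulVec, dotProduct, Matrix.transpose_apply]
  rw [h1, ← hcv]
  have h2 : (B.mulVecLin cv) ⬝ᵥ y = (Bᵀ *ᵥ y) ⬝ᵥ cv := by
    rw [Matrix.mulVecLin_apply, dotProduct_comm, Matrix.dotProduct_mulVec,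
      ← Matrix.mulVec_transpose]
  rw [h2, hy]
  simp

/-- Linear-algebra core of the proof of Theorem 1: with `Hᵀψ = ϱϑᵀ` a rank
factorization of rank `q` and `τ := κϑ`, the matrix `ϱ⊥ᵀ Hᵀ C₁ τ⊥` has full row
rank `m − q`. -/
theorem stmt5 {p n s m q : ℕ} (hs : 1 ≤ s) (hsp : s ≤ p) (hpn : p ≤ n) (hmp : m ≤ p)
    (ψ : Matrix (Fin p) (Fin s) ℝ) (hψ : ψ.rank = s)
    (κ : Matrix (Fin n) (Fin s) ℝ) (hκ : κ.rank = s)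
    (C₁ : Matrix (Fin p) (Fin n) ℝ)
    (ψperp : Matrix (Fin p) (Fin (p - s)) ℝ)
    (hψperp : ψᵀ * ψperp = 0) (hψperpr : ψperp.rank = p - s)
    (κperp : Matrix (Fin n) (Fin (n - s)) ℝ)
    (hκperp : κᵀ * κperp = 0) (hκperpr : κperp.rank = n - s)
    (hC₁ : (ψperpᵀ * C₁ * κperp).rank = p - s)
    (H : Matrix (Fin p) (Fin m) ℝ) (hH : H.rank = m)
    (ϱ : Matrix (Fin m) (Fin q) ℝ) (ϑ : Matrix (Fin s) (Fin q) ℝ)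
    (hfact : Hᵀ * ψ = ϱ * ϑᵀ) (hϱ : ϱ.rank = q) (hϑ : ϑ.rank = q)
    (ϱperp : Matrix (Fin m) (Fin (m - q)) ℝ)
    (hϱperp : ϱᵀ * ϱperp = 0) (hϱperpr : ϱperp.rank = m - q)
    (τperp : Matrix (Fin n) (Fin (n - q)) ℝ)
    (hτperp : (κ * ϑ)ᵀ * τperp = 0) (hτperpr : τperp.rank = n - q) :
    (ϱperpᵀ * (Hᵀ * C₁) * τperp).rank = m - q := by
  have hqs : q ≤ s := hϑ ▸ Matrix.rank_le_height ϑ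
  -- rank of τ = κ * ϑ is q
  have hτ : (κ * ϑ).rank = q := by
    apply rank_of_ker_eq_bot
    rw [LinearMap.ker_eq_bot']
    intro x hx
    have hx' : κ *ᵥ (ϑ *ᵥ x) = 0 := by
      rw [Matrix.mulVec_mulVec]
      simpa [Matrix.mulVecLin_apply] using hx
    exact mulVec_inj ϑ hϑ (mulVec_inj κ hκ hx')
  -- range ψperp = ker ψᵀ
  have hψrange := range_eq_ker ψ ψperp hψperp hψ hψperpr hsp
  -- range τperp = ker τᵀ
  have hτrange := range_eq_ker (κ * ϑ) τperp hτperp hτ hτperpr (by omega)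
  -- range κperp ≤ range τperp
  have hκτ : LinearMap.range κperp.mulVecLin ≤ LinearMap.range τperp.mulVecLin := by
    rw [hτrange]
    rintro x ⟨y, rfl⟩
    have h1 : (κ * ϑ)ᵀ.mulVecLin (κperp.mulVecLin y) = ((κ * ϑ)ᵀ * κperp).mulVecLin y := by
      rw [Matrix.mulVecLin_mul]; rfl
    have h2 : (κ * ϑ)ᵀ * κperp = 0 := by
      rw [Matrix.transpose_mul, Matrix.mul_assoc, hκperp, Matrix.mul_zero]
    rw [LinearMap.mem_ker, h1, h2]
    simp
  -- main argument: transpose has trivial kernel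
  rw [← Matrix.rank_transpose]
  apply rank_of_ker_eq_bot
  rw [LinearMap.ker_eq_bot']
  intro v hv
  have hv' : (ϱperpᵀ * (Hᵀ * C₁) * τperp)ᵀ *ᵥ v = 0 := by
    simpa only [Matrix.mulVecLin_apply] using hv
  -- rewrite the transpose product
  have htr : (ϱperpᵀ * (Hᵀ * C₁) * τperp)ᵀ = τperpᵀ * (C₁ᵀ * H) * ϱperp := by
    simp [Matrix.transpose_mul, Matrix.mul_assoc]
  rw [htr] at hv'
  have hvw : τperpᵀ *ᵥ (C₁ᵀ *ᵥ (H *ᵥ (ϱperp *ᵥ v))) = 0 := by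
    rw [Matrix.mulVec_mulVec, Matrix.mulVec_mulVec, Matrix.mulVec_mulVec]
    have hre : τperpᵀ * C₁ᵀ * H * ϱperp = τperpᵀ * (C₁ᵀ * H) * ϱperp := by
      rw [Matrix.mul_assoc τperpᵀ C₁ᵀ H]
    rw [hre]
    exact hv'
  -- ψᵀ w = 0
  have hψw : ψᵀ *ᵥ (H *ᵥ (ϱperp *ᵥ v)) = 0 := by
    rw [Matrix.mulVec_mulVec, Matrix.mulVec_mulVec]
    have h1 : ψᵀ * H = ϑ * ϱᵀ := by
      have := congrArg Matrix.transpose hfact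
      simpa [Matrix.transpose_mul] using this
    rw [h1, Matrix.mul_assoc, hϱperp, Matrix.mul_zero]
    simp
  -- w is in range of ψperp
  have hwmem : H *ᵥ (ϱperp *ᵥ v) ∈ LinearMap.range ψperp.mulVecLin := by
    rw [hψrange, LinearMap.mem_ker]
    simpa only [Matrix.mulVecLin_apply] using hψw
  obtain ⟨u, hu⟩ := hwmem
  rw [Matrix.mulVecLin_apply] at hu
  -- κperpᵀ C₁ᵀ w = 0
  have hκw : κperpᵀ *ᵥ (C₁ᵀ *ᵥ (H *ᵥ (ϱperp *ᵥ v))) = 0 :=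
    transpose_mulVec_eq_zero κperp τperp hκτ hvw
  -- conclude u = 0 using full rank of ψperpᵀ C₁ κperp
  have hM : ((ψperpᵀ * C₁ * κperp)ᵀ).rank = p - s := by
    rw [Matrix.rank_transpose]; exact hC₁
  have hMu : (ψperpᵀ * C₁ * κperp)ᵀ *ᵥ u = 0 := by
    have h2 : (ψperpᵀ * C₁ * κperp)ᵀ = κperpᵀ * C₁ᵀ * ψperp := by
      simp [Matrix.transpose_mul, Matrix.mul_assoc]
    rw [h2, Matrix.mul_assoc, ← Matrix.mulVec_mulVec, ← Matrix.mulVec_mulVec, hu]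
    exact hκw
  have hu0 : u = 0 := mulVec_inj _ hM hMu
  have hw0 : H *ᵥ (ϱperp *ᵥ v) = 0 := by rw [← hu, hu0, Matrix.mulVec_zero]
  have hϱv : ϱperp *ᵥ v = 0 := mulVec_inj H hH hw0
  exact mulVec_inj ϱperp hϱperpr hϱv
end

section
/- Let κ ∈ ℝ^{n×s} and ϑ ∈ ℝ^{s×q} have full column rank, and set τ := κ ϑ ∈ ℝ^{n×q}. Then the n×(n−q) matrix (κ_⊥, κ(κᵀκ)⁻¹ϑ_⊥), obtained by placing the columns of κ_⊥ next to the columns of κ(κᵀκ)⁻¹ϑ_⊥, has full column rank n − q, and its columns span the orthogonal complement of the column space of τ; in particular τᵀ(κ_⊥, κ(κᵀκ)⁻¹ϑ_⊥) = 0. (Intermediate claim in the proof of Theorem 1: τ_⊥ = (κ_⊥, κ̄ϑ_⊥).) -/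
/-!
Full column rank makes `κᵀ κ` invertible, so `κ̄ = κ (κᵀ κ)⁻¹` satisfies `κᵀ κ̄ = 1`; with
`κᵀ κ⊥ = 0`, multiplying `(κ⊥, κ̄ ϑ⊥)` by `κᵀ` gives `(0, ϑ⊥)`. Hence
`τᵀ (κ⊥, κ̄ ϑ⊥) = ϑᵀ (0, ϑ⊥) = 0`, and a vector `(x, y)` in the kernel of `(κ⊥, κ̄ ϑ⊥)` has
`ϑ⊥ y = 0`, so `y = 0`, and then `κ⊥ x = 0`, so `x = 0`: the columns are independent and there
are `(n - s) + (s - q) = n - q` of them.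
-/

open Matrix

namespace Matrix

variable {l m n₁ n₂ R : Type*} [Fintype n₁]

theorem rank_eq_card_iff_mulVec_injective [Field R] (M : Matrix m n₁ R) :
    M.rank = Fintype.card n₁ ↔ Function.Injective M.mulVec := by
  rw [mulVec_injective_iff, linearIndependent_iff_card_eq_finrank_span,
    rank_eq_finrank_span_cols, Set.finrank, eq_comm]

theorem isUnit_transpose_mul_self_of_rank_eq_card [Fintype m] [Field R] [LinearOrder R]
    [IsStrictOrderedRing R] [DecidableEq n₁] {K : Matrix m n₁ R}
    (hK : K.rank = Fintype.card n₁) : IsUnit (Kᵀ * K) := by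
  rw [← mulVec_injective_iff_isUnit, ← rank_eq_card_iff_mulVec_injective,
    rank_transpose_mul_self, hK]

theorem transpose_mul_mul_inv_transpose_mul_self_mul [Fintype m] [CommRing R] [DecidableEq n₁]
    {K : Matrix m n₁ R} (hK : IsUnit (Kᵀ * K)) (B : Matrix n₁ n₂ R) :
    Kᵀ * (K * (Kᵀ * K)⁻¹ * B) = B := by
  rw [← Matrix.mul_assoc, ← Matrix.mul_assoc, mul_nonsing_inv _ ((isUnit_iff_isUnit_det _).mp hK),
    Matrix.one_mul]

theorem fromCols_mulVec_injective [Fintype n₂] [CommRing R] [Fintype l] {A : Matrix l n₁ R}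
    {B : Matrix l n₂ R} {C : Matrix m l R} (hCA : C * A = 0)
    (hA : Function.Injective A.mulVec) (hCB : Function.Injective (C * B).mulVec) :
    Function.Injective (fromCols A B).mulVec := by
  rw [← coe_mulVecLin, ← LinearMap.ker_eq_bot, ker_mulVecLin_eq_bot_iff]
  intro v hv
  rw [← Sum.elim_comp_inl_inr v, fromCols_mulVec_sumElim] at hv
  have hy : v ∘ Sum.inr = 0 := by
    apply hCB
    simpa [mulVec_mulVec, mulVec_add, hCA] using congrArg (C *ᵥ ·) hv
  have hx : v ∘ Sum.inl = 0 := by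
    apply hA
    simpa [hy] using hv
  rw [← Sum.elim_comp_inl_inr v, hx, hy, Sum.elim_zero_zero]

theorem rank_fromCols_of_mul_eq_zero [Fintype n₂] [Field R] [Fintype l] {A : Matrix l n₁ R}
    {B : Matrix l n₂ R} {C : Matrix m l R} (hCA : C * A = 0)
    (hA : A.rank = Fintype.card n₁) (hCB : (C * B).rank = Fintype.card n₂) :
    (fromCols A B).rank = Fintype.card n₁ + Fintype.card n₂ := by
  rw [rank_eq_card_iff_mulVec_injective] at hA hCB
  rw [← Fintype.card_sum, rank_eq_card_iff_mulVec_injective]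
  exact fromCols_mulVec_injective hCA hA hCB

end Matrix

theorem stmt7_general {n s q : ℕ} (hq : q ≤ s) (hs : s ≤ n)
    (κ : Matrix (Fin n) (Fin s) ℝ) (hκ : κ.rank = s)
    (ϑ : Matrix (Fin s) (Fin q) ℝ)
    (κperp : Matrix (Fin n) (Fin (n - s)) ℝ)
    (hκperp : κᵀ * κperp = 0) (hκperpr : κperp.rank = n - s)
    (ϑperp : Matrix (Fin s) (Fin (s - q)) ℝ)
    (hϑperp : ϑᵀ * ϑperp = 0) (hϑperpr : ϑperp.rank = s - q) :
    (Matrix.fromCols κperp (κ * (κᵀ * κ)⁻¹ * ϑperp)).rank = n - q ∧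
    (κ * ϑ)ᵀ * Matrix.fromCols κperp (κ * (κᵀ * κ)⁻¹ * ϑperp) = 0 := by
  have hgram : IsUnit (κᵀ * κ) :=
    isUnit_transpose_mul_self_of_rank_eq_card (by rw [hκ, Fintype.card_fin])
  have hbar := transpose_mul_mul_inv_transpose_mul_self_mul hgram ϑperp
  constructor
  · rw [rank_fromCols_of_mul_eq_zero hκperp (by rw [hκperpr, Fintype.card_fin])
      (by rw [hbar, hϑperpr, Fintype.card_fin]), Fintype.card_fin, Fintype.card_fin]
    omega
  · rw [transpose_mul, Matrix.mul_assoc, mul_fromCols, hκperp, hbar, mul_fromCols, Matrix.mul_zero,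
      hϑperp, fromCols_zero]

/-- Intermediate claim in the proof of Theorem 1: `τ⊥ = (κ⊥, κ̄ϑ⊥)`, i.e. the
matrix obtained by placing the columns of `κ⊥` next to those of `κ(κᵀκ)⁻¹ϑ⊥` has
full column rank `n − q` and annihilates `τ := κϑ` (hence its columns span the
orthogonal complement of the column space of `τ`). -/
theorem stmt7 {n s q : ℕ} (hq : q ≤ s) (hs : s ≤ n)
    (κ : Matrix (Fin n) (Fin s) ℝ) (hκ : κ.rank = s)
    (ϑ : Matrix (Fin s) (Fin q) ℝ) (hϑ : ϑ.rank = q)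
    (κperp : Matrix (Fin n) (Fin (n - s)) ℝ)
    (hκperp : κᵀ * κperp = 0) (hκperpr : κperp.rank = n - s)
    (ϑperp : Matrix (Fin s) (Fin (s - q)) ℝ)
    (hϑperp : ϑᵀ * ϑperp = 0) (hϑperpr : ϑperp.rank = s - q) :
    (Matrix.fromCols κperp (κ * (κᵀ * κ)⁻¹ * ϑperp)).rank = n - q ∧
    (κ * ϑ)ᵀ * Matrix.fromCols κperp (κ * (κᵀ * κ)⁻¹ * ϑperp) = 0 :=
  stmt7_general hq hs κ hκ ϑ κperp hκperp hκperpr ϑperp hϑperp hϑperpr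
end

section
/- Let ν_k := 1/((k − 1/2)π) for k ≥ 1, and define the rearranged sequence μ_k := ν_{2n} if k = n² for some positive integer n, and μ_k := ν_{2(k − ⌊√k⌋) − 1} otherwise. Then for every integer K ≥ 1, π² K Σ_{k=K+1}^∞ μ_k² ≥ K / (4(⌊√(K+1)⌋ + 1)); in particular π² K Σ_{k=K+1}^∞ μ_k² grows at least at the rate √K/4 and tends to infinity as K → ∞. (Lower bound in Lemma B.5 on the rearranged Karhunen–Loève basis.) -/
open Filter

/-- The Karhunen–Loève singular values of the Brownian-motion covariance kernel. -/
noncomputable def klnu (k : ℕ) : ℝ := 1 / (((k : ℝ) - 1 / 2) * Real.pi)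

/-- The rearranged Karhunen–Loève sequence of Lemma B.5: the even-numbered
elements `ν_{2n}` are sent to positions `k = n²`, and the remaining positions are
filled with the odd-numbered elements `ν_{2(k − ⌊√k⌋) − 1}` in their original
order. -/
noncomputable def klmu (k : ℕ) : ℝ :=
  if Nat.sqrt k * Nat.sqrt k = k then klnu (2 * Nat.sqrt k)
  else klnu (2 * (k - Nat.sqrt k) - 1)

lemma klnu_sq (m : ℕ) : klnu m ^ 2 = 1 / (((m:ℝ) - 1/2)^2 * Real.pi^2) := by
  unfold klnu; rw [div_pow, mul_pow]; norm_num

lemma klnu_sq_le (m : ℕ) : klnu m ^ 2 ≤ 16 / (Real.pi^2 * ((m:ℝ)+1)^2) := by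
  rw [klnu_sq]
  have hpi := Real.pi_pos
  have h1 : ((m:ℝ)+1)^2 ≤ 16 * ((m:ℝ) - 1/2)^2 := by
    rcases Nat.eq_zero_or_pos m with h | h
    · subst h; norm_num
    · have : (1:ℝ) ≤ (m:ℝ) := by exact_mod_cast h
      nlinarith
  have hm : (0:ℝ) < ((m:ℝ) - 1/2)^2 := by
    rcases Nat.eq_zero_or_pos m with h | h
    · subst h; norm_num
    · have : (1:ℝ) ≤ (m:ℝ) := by exact_mod_cast h
      nlinarith
  rw [div_le_div_iff₀ (by positivity) (by positivity)]
  nlinarith [sq_nonneg Real.pi]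

noncomputable def spart (j : ℕ) : ℝ :=
  if Nat.sqrt j * Nat.sqrt j = j then klnu (2 * Nat.sqrt j) ^ 2 else 0

noncomputable def npart (j : ℕ) : ℝ :=
  if Nat.sqrt j * Nat.sqrt j = j then 0 else klnu (2 * (j - Nat.sqrt j) - 1) ^ 2

lemma klmu_sq_eq (j : ℕ) : klmu j ^ 2 = spart j + npart j := by
  unfold klmu spart npart; split_ifs <;> ring

lemma summable_base : Summable (fun n : ℕ => 1 / ((n:ℝ)+1)^2) := by
  have := (summable_nat_add_iff (f := fun n : ℕ => 1 / (n:ℝ)^2) 1).2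
    (Real.summable_one_div_nat_pow.2 one_lt_two)
  exact this.congr (fun n => by push_cast; ring)

lemma summable_spart : Summable spart := by
  have hinj : Function.Injective (fun n : ℕ => n * n) := fun a b h => by
    simpa [Nat.sqrt_eq] using congrArg Nat.sqrt h
  refine (hinj.summable_iff ?_).1 ?_
  · intro x hx
    unfold spart
    rw [if_neg]
    intro h
    exact hx ⟨Nat.sqrt x, h⟩
  · have : (spart ∘ fun n : ℕ => n * n) = fun n : ℕ => klnu (2 * n) ^ 2 := by
      funext n
      simp only [Function.comp, spart]
      rw [if_pos (by rw [Nat.sqrt_eq]), Nat.sqrt_eq]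
    rw [this]
    refine Summable.of_nonneg_of_le (fun n => sq_nonneg _)
      (fun n => le_trans (klnu_sq_le (2*n)) ?_) (summable_base.mul_left (16 / Real.pi^2))
    have hpi := Real.pi_pos
    have heq : (16 / Real.pi^2 * (1/((n:ℝ)+1)^2)) = 16 / (Real.pi^2 * ((n:ℝ)+1)^2) := by
      field_simp
    rw [heq]
    push_cast
    gcongr
    linarith [Nat.cast_nonneg (α := ℝ) n]

lemma two_sqrt_le {j : ℕ} (hj : 2 ≤ j) : 2 * Nat.sqrt j ≤ j := by
  have h1 : Nat.sqrt j * Nat.sqrt j ≤ j := by nlinarith [Nat.sqrt_le' j]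
  rcases le_or_gt (Nat.sqrt j) 1 with h | h
  · omega
  · nlinarith

lemma nonsquare_ge_two {j : ℕ} (h : ¬ Nat.sqrt j * Nat.sqrt j = j) : 2 ≤ j := by
  by_contra h2
  interval_cases j <;> simp [Nat.sqrt] at h

lemma summable_npart : Summable npart := by
  refine Summable.of_nonneg_of_le (fun j => ?_) (fun j => ?_)
    (summable_base.mul_left (64 / Real.pi^2))
  · unfold npart; split_ifs
    · exact le_refl 0
    · exact sq_nonneg _
  · have hpi := Real.pi_pos
    unfold npart; split_ifs with h
    · positivity
    · have hj2 : 2 ≤ j := nonsquare_ge_two h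
      have hs := two_sqrt_le hj2
      have hsub : Nat.sqrt j ≤ j := Nat.sqrt_le_self j
      have hnat : j - 1 ≤ 2 * (j - Nat.sqrt j) - 1 := by omega
      have hcast : (j:ℝ) - 1 ≤ ((2 * (j - Nat.sqrt j) - 1 : ℕ) : ℝ) := by
        have h1 : ((j - 1 : ℕ) : ℝ) ≤ ((2 * (j - Nat.sqrt j) - 1 : ℕ) : ℝ) := by
          exact_mod_cast hnat
        have h2 : ((j - 1 : ℕ) : ℝ) = (j:ℝ) - 1 := by
          rw [Nat.cast_sub (by omega)]; norm_num
        linarith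
      refine le_trans (klnu_sq_le _) ?_
      have heq : 64 / Real.pi^2 * (1/((j:ℝ)+1)^2) = 64 / (Real.pi^2 * ((j:ℝ)+1)^2) := by
        field_simp
      rw [heq]
      have hjR : (2:ℝ) ≤ (j:ℝ) := by exact_mod_cast hj2
      set m : ℕ := 2 * (j - Nat.sqrt j) - 1
      have hm0 : (0:ℝ) ≤ (m:ℝ) := Nat.cast_nonneg m
      rw [div_le_div_iff₀ (by positivity) (by positivity)]
      have hpi2 : (0:ℝ) < Real.pi ^ 2 := by positivity
      have key : ((j:ℝ)+1)^2 ≤ 4*((m:ℝ)+1)^2 := by nlinarith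
      nlinarith [mul_le_mul_of_nonneg_left key hpi2.le]

lemma summable_klmu_sq : Summable (fun j : ℕ => klmu j ^ 2) :=
  (summable_spart.add summable_npart).congr (fun j => (klmu_sq_eq j).symm)

lemma summable_tail (K : ℕ) : Summable (fun k : ℕ => klmu (K + 1 + k) ^ 2) := by
  have h := (summable_nat_add_iff (K+1)).2 summable_klmu_sq
  exact h.congr fun n => by rw [add_comm]

lemma aux_ineq (x y S : ℝ) (hS : 1 ≤ S) (hx : 1 ≤ x) (hxS : x ≤ S + 1)
    (hy : y = 4 * (S + 2)^2) :
    1 / (4 * (S + 1)) ≤ (1/2) / (2*x - 1/2) - (1/2) / (2*(x+y) - 1/2) := by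
  subst hy
  have p1 : (0:ℝ) < 2*x - 1/2 := by linarith
  have p2 : (0:ℝ) < 4*S + 3 := by linarith
  have p3 : (0:ℝ) < 16*(S+2)^2 := by nlinarith
  have p4 : (0:ℝ) < 2*(x + 4*(S+2)^2) - 1/2 := by nlinarith
  have h1 : 1 / (4*S + 3) ≤ (1/2) / (2*x - 1/2) := by
    rw [div_le_div_iff₀ p2 p1]; nlinarith
  have h2 : (1/2) / (2*(x + 4*(S+2)^2) - 1/2) ≤ 1 / (16*(S+2)^2) := by
    rw [div_le_div_iff₀ p4 p3]; nlinarith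
  have h3 : 1 / (4*(S+1)) ≤ 1 / (4*S+3) - 1 / (16*(S+2)^2) := by
    rw [div_sub_div _ _ (ne_of_gt p2) (ne_of_gt p3), div_le_div_iff₀ (by linarith) (by positivity)]
    nlinarith
  linarith

lemma pisq_tsum_lb (K : ℕ) (hK : 1 ≤ K) :
    1 / (4 * ((Nat.sqrt (K+1) : ℝ) + 1)) ≤ Real.pi ^ 2 * ∑' k : ℕ, klmu (K + 1 + k) ^ 2 := by
  have hpi := Real.pi_pos
  set s := Nat.sqrt (K+1) with hs
  set N : ℕ := if s * s = K+1 then s else s + 1 with hN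
  have hsq : s * s ≤ K + 1 := Nat.sqrt_le' (K+1) |>.trans_eq' (by rw [pow_two])
  have hlt : K + 1 < (s+1) * (s+1) := by
    have := Nat.lt_succ_sqrt' (K+1); rw [pow_two] at this; exact this
  have hN1 : K + 1 ≤ N * N := by
    rw [hN]; split_ifs with h
    · omega
    · omega
  have hN2 : N ≤ s + 1 := by rw [hN]; split_ifs <;> omega
  have hspos : 1 ≤ s := by
    rw [hs]; exact Nat.le_sqrt'.2 (by omega)
  have hNpos : 1 ≤ N := by rw [hN]; split_ifs with h <;> omega
  set M : ℕ := 4 * (s+2)^2 with hM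
  have hsqle : ∀ n : ℕ, K + 1 ≤ (N+n)^2 := by
    intro n
    calc K + 1 ≤ N * N := hN1
      _ = N ^ 2 := by ring
      _ ≤ (N+n)^2 := Nat.pow_le_pow_left (Nat.le_add_right N n) 2
  have hstep : ∀ n : ℕ, klmu (K + 1 + ((N+n)^2 - (K+1))) ^ 2 = klnu (2*(N+n)) ^ 2 := by
    intro n
    rw [Nat.add_sub_cancel' (hsqle n)]
    unfold klmu
    rw [if_pos (by rw [Nat.sqrt_eq']; ring), Nat.sqrt_eq']
  have hinj : ∀ x ∈ Finset.range M, ∀ y ∈ Finset.range M,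
      (N+x)^2 - (K+1) = (N+y)^2 - (K+1) → x = y := by
    intro x _ y _ h
    have h2 : (N+x)^2 = (N+y)^2 := by
      have := hsqle x; have := hsqle y; omega
    have h3 : N + x = N + y := Nat.pow_left_injective (by norm_num) h2
    omega
  have hFsum : ∑ n ∈ Finset.range M, klnu (2*(N+n))^2 ≤ ∑' k : ℕ, klmu (K+1+k)^2 := by
    calc ∑ n ∈ Finset.range M, klnu (2*(N+n))^2
        = ∑ k ∈ (Finset.range M).image (fun n => (N+n)^2 - (K+1)), klmu (K+1+k)^2 := by
          rw [Finset.sum_image hinj]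
          exact Finset.sum_congr rfl (fun n _ => (hstep n).symm)
      _ ≤ ∑' k : ℕ, klmu (K+1+k)^2 :=
          Summable.sum_le_tsum _ (fun k _ => sq_nonneg _) (summable_tail K)
  set f : ℕ → ℝ := fun n => (1/2) / (2*((N:ℝ)+n) - 1/2) with hf
  have htel : ∑ n ∈ Finset.range M, (f n - f (n+1)) = f 0 - f M := Finset.sum_range_sub' f M
  have hNR : (1:ℝ) ≤ (N:ℝ) := by exact_mod_cast hNpos
  have hterm : ∀ n : ℕ, f n - f (n+1) ≤ Real.pi^2 * klnu (2*(N+n))^2 := by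
    intro n
    have hnR : (0:ℝ) ≤ (n:ℝ) := Nat.cast_nonneg n
    have hapos : (0:ℝ) < 2*((N:ℝ)+n) - 1/2 := by linarith
    have h1 : f n - f (n+1) = 1 / ((2*((N:ℝ)+n) - 1/2) * ((2*((N:ℝ)+n) - 1/2)+2)) := by
      rw [hf]; push_cast; rw [div_sub_div _ _ (by linarith) (by linarith)]
      rw [div_eq_div_iff (by nlinarith) (by nlinarith)]
      ring
    have hbe : ((2*(N+n) : ℕ) : ℝ) - 1/2 = 2*((N:ℝ)+(n:ℝ)) - 1/2 := by push_cast; ring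
    rw [klnu_sq, hbe, h1, mul_one_div,
      mul_comm ((2*((N:ℝ)+(n:ℝ)) - 1/2)^2) (Real.pi^2),
      div_mul_cancel_left₀ (by positivity : (Real.pi:ℝ)^2 ≠ 0), ← one_div]
    apply one_div_le_one_div_of_le (by positivity)
    nlinarith
  have hlow : f 0 - f M ≤ Real.pi^2 * ∑' k : ℕ, klmu (K+1+k)^2 := by
    calc f 0 - f M = ∑ n ∈ Finset.range M, (f n - f (n+1)) := htel.symm
      _ ≤ ∑ n ∈ Finset.range M, Real.pi^2 * klnu (2*(N+n))^2 :=
          Finset.sum_le_sum (fun n _ => hterm n)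
      _ = Real.pi^2 * ∑ n ∈ Finset.range M, klnu (2*(N+n))^2 := by rw [Finset.mul_sum]
      _ ≤ Real.pi^2 * ∑' k : ℕ, klmu (K+1+k)^2 :=
          mul_le_mul_of_nonneg_left hFsum (by positivity)
  refine le_trans ?_ hlow
  have hSR : (1:ℝ) ≤ (s:ℝ) := by exact_mod_cast hspos
  have hN2R : (N:ℝ) ≤ (s:ℝ) + 1 := by exact_mod_cast hN2
  have hMR : (M:ℝ) = 4*((s:ℝ)+2)^2 := by rw [hM]; push_cast; ring
  have := aux_ineq (N:ℝ) (M:ℝ) (s:ℝ) hSR hNR hN2R hMR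
  have hf0 : f 0 = (1/2) / (2*(N:ℝ) - 1/2) := by rw [hf]; norm_num
  have hfM : f M = (1/2) / (2*((N:ℝ)+(M:ℝ)) - 1/2) := by rw [hf]
  rw [hf0, hfM]
  exact this

/-- Lower bound in Lemma B.5: `π² K Σ_{k=K+1}^∞ μₖ² ≥ K/(4(⌊√(K+1)⌋ + 1))` for
every `K ≥ 1`; in particular `π² K Σ_{k=K+1}^∞ μₖ²` grows at least at the rate
`√K/4` and tends to infinity. -/
theorem stmt12 :
    (∀ K : ℕ, 1 ≤ K →
      (K : ℝ) / (4 * ((Nat.sqrt (K + 1) : ℝ) + 1)) ≤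
        Real.pi ^ 2 * (K : ℝ) * ∑' k : ℕ, klmu (K + 1 + k) ^ 2) ∧
    Tendsto (fun K : ℕ => Real.pi ^ 2 * (K : ℝ) * ∑' k : ℕ, klmu (K + 1 + k) ^ 2)
      atTop atTop := by
  have main : ∀ K : ℕ, 1 ≤ K →
      (K : ℝ) / (4 * ((Nat.sqrt (K + 1) : ℝ) + 1)) ≤
        Real.pi ^ 2 * (K : ℝ) * ∑' k : ℕ, klmu (K + 1 + k) ^ 2 := by
    intro K hK
    have h := pisq_tsum_lb K hK
    have hK0 : (0:ℝ) ≤ (K:ℝ) := Nat.cast_nonneg K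
    calc (K : ℝ) / (4 * ((Nat.sqrt (K + 1) : ℝ) + 1))
        = (K:ℝ) * (1 / (4 * ((Nat.sqrt (K + 1) : ℝ) + 1))) := by ring
      _ ≤ (K:ℝ) * (Real.pi ^ 2 * ∑' k : ℕ, klmu (K + 1 + k) ^ 2) :=
          mul_le_mul_of_nonneg_left h hK0
      _ = Real.pi ^ 2 * (K : ℝ) * ∑' k : ℕ, klmu (K + 1 + k) ^ 2 := by ring
  refine ⟨main, ?_⟩
  have h1 : Tendsto (fun K : ℕ => Nat.sqrt (K+1)) atTop atTop := by
    refine tendsto_atTop_atTop.2 (fun b => ⟨b*b, fun a ha => ?_⟩)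
    calc b = Nat.sqrt (b*b) := (Nat.sqrt_eq b).symm
      _ ≤ Nat.sqrt (a+1) := Nat.sqrt_le_sqrt (by omega)
  have h2 : Tendsto (fun K : ℕ => ((Nat.sqrt (K+1) : ℝ))) atTop atTop :=
    tendsto_natCast_atTop_atTop.comp h1
  have h3 : Tendsto (fun K : ℕ => (((Nat.sqrt (K+1) : ℝ)) - 1) / 4) atTop atTop := by
    have h4 := Tendsto.atTop_div_const (r := (4:ℝ)) (by norm_num)
      (tendsto_atTop_add_const_right atTop (-1) h2)
    exact h4.congr (fun K => by ring)
  refine tendsto_atTop_mono' atTop ?_ h3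
  filter_upwards [eventually_ge_atTop 1] with K hK
  refine le_trans ?_ (main K hK)
  have hs : Nat.sqrt (K+1) * Nat.sqrt (K+1) ≤ K + 1 := by
    nlinarith [Nat.sqrt_le' (K+1)]
  have hsR : ((Nat.sqrt (K+1) : ℝ)) * ((Nat.sqrt (K+1) : ℝ)) ≤ (K:ℝ) + 1 := by
    exact_mod_cast hs
  have hs0 : (0:ℝ) ≤ ((Nat.sqrt (K+1) : ℝ)) := Nat.cast_nonneg _
  rw [div_le_div_iff₀ (by norm_num) (by positivity)]
  nlinarith
end

section
/- Let ν_k := 1/((k − 1/2)π) for k ≥ 1, and define the rearranged sequence μ_k := ν_{2n} if k = n² for some positive integer n, and μ_k := ν_{2(k − ⌊√k⌋) − 1} otherwise. Then there exists a constant C > 0 such that for every integer K ≥ 1, Σ_{k=K+1}^∞ μ_k⁴ ≤ C K^{−3/2}. (Fourth-power tail bound in Lemma B.5 on the rearranged Karhunen–Loève basis.) -/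
lemma klnu_pow4_le {m : ℕ} {b : ℝ} (hb : 0 < b) (h : b ≤ (m : ℝ) - 1/2) :
    klnu m ^ 4 ≤ 1 / b ^ 4 := by
  have hpi := Real.pi_gt_three
  have h1 : (0:ℝ) < ((m:ℝ) - 1/2) * Real.pi := by nlinarith
  have h2 : b ≤ ((m:ℝ) - 1/2) * Real.pi := by nlinarith
  have hle : klnu m ≤ 1 / b := by
    unfold klnu
    exact one_div_le_one_div_of_le hb h2
  have h0 : 0 ≤ klnu m := by unfold klnu; positivity
  calc klnu m ^ 4 ≤ (1/b)^4 := pow_le_pow_left₀ h0 hle 4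
    _ = 1 / b^4 := by rw [div_pow, one_pow]

lemma klmu_pow4_le {j : ℕ} (hj : 2 ≤ j) :
    klmu j ^ 4 ≤ 256 / (j:ℝ)^4 +
      (if Nat.sqrt j * Nat.sqrt j = j then 1/(j:ℝ)^2 else 0) := by
  set s := Nat.sqrt j with hs
  have hss : s * s ≤ j := by
    have := Nat.sqrt_le' j
    simpa [pow_two] using this
  have hs1 : 1 ≤ s := by
    have := Nat.sqrt_le_sqrt (show 1 ≤ j by omega)
    simpa using this
  have hjpos : (0:ℝ) < j := by positivity
  have hs1R : (1:ℝ) ≤ s := by exact_mod_cast hs1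
  by_cases hsq : s * s = j
  · rw [klmu, ← hs, if_pos hsq, if_pos hsq]
    have hb : (0:ℝ) < s := by positivity
    have : klnu (2 * s) ^ 4 ≤ 1 / (s:ℝ)^4 := by
      apply klnu_pow4_le hb
      push_cast
      linarith
    refine le_trans this ?_
    have hcastsq : ((s:ℝ)) * s = (j:ℝ) := by exact_mod_cast hsq
    have hcast : ((s:ℝ))^4 = (j:ℝ)^2 := by nlinarith [hcastsq]
    rw [hcast]
    have : (0:ℝ) ≤ 256 / (j:ℝ)^4 := by positivity
    linarith
  · rw [klmu, ← hs, if_neg hsq, if_neg hsq]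
    have h7 : 8 * s + 6 ≤ 7 * j := by
      rcases Nat.lt_or_ge s 2 with h2 | h2
      · have : s = 1 := by omega
        omega
      · nlinarith [hss]
    have hsltj : s < j := by nlinarith [hss, hs1]
    have hm1 : 1 ≤ j - s := by omega
    have hcast : ((2 * (j - s) - 1 : ℕ) : ℝ) = 2 * ((j:ℝ) - s) - 1 := by
      have h2 : 1 ≤ 2 * (j - s) := by omega
      push_cast [Nat.cast_sub h2, Nat.cast_sub hsltj.le]
      ring
    have hb : (0:ℝ) < (j:ℝ)/4 := by positivity
    have key : klnu (2 * (j - s) - 1) ^ 4 ≤ 1 / ((j:ℝ)/4)^4 := by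
      apply klnu_pow4_le hb
      rw [hcast]
      have : (8:ℝ) * s + 6 ≤ 7 * j := by exact_mod_cast h7
      linarith
    refine le_trans key ?_
    have heq : 1 / ((j:ℝ)/4)^4 = 256 / (j:ℝ)^4 := by
      field_simp; ring
    rw [heq]
    simp

lemma telescope_step {a : ℝ} (ha1 : 1 ≤ a) :
    1 / (a+1)^4 ≤ 1 / (3 * a^3) - 1 / (3 * (a+1)^3) := by
  have hpa : 0 < a := by linarith
  have hpa1 : 0 < a + 1 := by linarith
  rw [div_sub_div _ _ (by positivity) (by positivity),
    div_le_div_iff₀ (by positivity) (by positivity)]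
  ring_nf
  nlinarith [pow_pos hpa 3, pow_pos hpa 2, pow_pos hpa 4, pow_pos hpa 5, pow_pos hpa 6]

lemma tail_pow4 {m : ℕ} (hm : 1 ≤ m) :
    ∑' j : ℕ, 1 / ((m:ℝ) + 1 + j)^4 ≤ 1 / (3 * (m:ℝ)^3) := by
  have hmR : (1:ℝ) ≤ m := by exact_mod_cast hm
  apply Real.tsum_le_of_sum_range_le
  · intro n; positivity
  · intro n
    have key : ∀ i : ℕ, 1 / ((m:ℝ) + 1 + i)^4 ≤
        1 / (3 * ((m:ℝ) + i)^3) - 1 / (3 * ((m:ℝ) + (i+1))^3) := by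
      intro i
      have ha1 : 1 ≤ (m:ℝ) + i := by
        have : (0:ℝ) ≤ i := Nat.cast_nonneg i
        linarith
      have hrw : (m:ℝ) + 1 + i = ((m:ℝ) + i) + 1 := by ring
      have hrw2 : (m:ℝ) + (i+1) = ((m:ℝ) + i) + 1 := by ring
      rw [hrw, hrw2]
      exact telescope_step ha1
    calc ∑ i ∈ Finset.range n, 1 / ((m:ℝ) + 1 + i)^4
        ≤ ∑ i ∈ Finset.range n, (1 / (3 * ((m:ℝ) + i)^3) - 1 / (3 * ((m:ℝ) + (i+1))^3)) :=
          Finset.sum_le_sum fun i _ => key i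
      _ = 1 / (3 * ((m:ℝ) + (0:ℕ))^3) - 1 / (3 * ((m:ℝ) + n)^3) := by
          have := Finset.sum_range_sub' (f := fun i : ℕ => 1 / (3 * ((m:ℝ) + i)^3)) n
          rw [← this]
          apply Finset.sum_congr rfl
          intro i _
          push_cast
          ring_nf
      _ ≤ 1 / (3 * (m:ℝ)^3) := by
          have h1 : 0 ≤ 1 / (3 * ((m:ℝ) + n)^3) := by positivity
          have h0 : ((0:ℕ):ℝ) = 0 := by norm_num
          rw [h0, add_zero]
          linarith

lemma squares_tsum (K : ℕ) :
    ∑' k : ℕ, (if Nat.sqrt (K+1+k) * Nat.sqrt (K+1+k) = K+1+k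
        then 1/((K+1+k : ℕ):ℝ)^2 else 0)
      = ∑' j : ℕ, 1 / (((Nat.sqrt K : ℝ)) + 1 + j)^4 := by
  set m := Nat.sqrt K with hm
  have hmK : m * m ≤ K := Nat.sqrt_le K
  have hKm : K < (m+1) * (m+1) := Nat.lt_succ_sqrt K
  set f : ℕ → ℝ := fun k =>
    if Nat.sqrt (K+1+k) * Nat.sqrt (K+1+k) = K+1+k
      then 1/((K+1+k : ℕ):ℝ)^2 else 0 with hf
  set g : ℕ → ℕ := fun j => (m+1+j) * (m+1+j) - (K+1) with hg
  have hga : ∀ j : ℕ, K + 1 + g j = (m+1+j) * (m+1+j) := by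
    intro j
    have : (m+1) * (m+1) ≤ (m+1+j) * (m+1+j) := Nat.mul_le_mul (by omega) (by omega)
    simp only [hg]
    omega
  have hginj : Function.Injective g := by
    intro j1 j2 h
    simp only [hg] at h
    have h1 := hga j1
    have h2 := hga j2
    simp only [hg] at h1 h2
    have : (m+1+j1) * (m+1+j1) = (m+1+j2) * (m+1+j2) := by omega
    have := Nat.mul_self_inj.mp this
    omega
  have hsupp : Function.support f ⊆ Set.range g := by
    intro k hk
    simp only [hf, Function.mem_support, ne_eq, ite_eq_right_iff, not_forall] at hk
    obtain ⟨hsq, -⟩ := hk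
    set n := Nat.sqrt (K+1+k) with hn
    have hmn : m + 1 ≤ n := by
      by_contra hc
      push_neg at hc
      have : n * n ≤ m * m := Nat.mul_le_mul (by omega) (by omega)
      omega
    refine ⟨n - (m+1), ?_⟩
    have he : m + 1 + (n - (m+1)) = n := by omega
    simp only [hg, he]
    omega
  have hfg : ∀ j : ℕ, f (g j) = 1 / (((m:ℝ)) + 1 + j)^4 := by
    intro j
    have h1 := hga j
    have h2 : Nat.sqrt (K + 1 + g j) = m + 1 + j := by rw [h1]; exact Nat.sqrt_eq _
    show (if Nat.sqrt (K+1+g j) * Nat.sqrt (K+1+g j) = K+1+g j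
      then 1/((K+1+g j : ℕ):ℝ)^2 else 0) = 1 / (((m:ℝ)) + 1 + j)^4
    rw [h2, if_pos h1.symm, h1]
    push_cast
    ring
  calc ∑' k, f k = ∑' j, f (g j) := (hginj.tsum_eq hsupp).symm
    _ = ∑' j : ℕ, 1 / (((m:ℝ)) + 1 + j)^4 := tsum_congr hfg

/-- Fourth-power tail bound in Lemma B.5: there is `C > 0` with
`Σ_{k=K+1}^∞ μₖ⁴ ≤ C K^{−3/2}` for every `K ≥ 1`. -/
theorem stmt13 :
    ∃ C : ℝ, 0 < C ∧ ∀ K : ℕ, 1 ≤ K →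
      ∑' k : ℕ, klmu (K + 1 + k) ^ 4 ≤ C * (K : ℝ) ^ (-(3 : ℝ) / 2) := by
  refine ⟨88, by norm_num, fun K hK => ?_⟩
  set m := Nat.sqrt K with hm
  have hm1 : 1 ≤ m := by
    have := Nat.sqrt_le_sqrt hK
    simpa using this
  set A : ℕ → ℝ := fun k => 256 * (1 / ((K:ℝ) + 1 + k)^4) with hA
  set B : ℕ → ℝ := fun k =>
    if Nat.sqrt (K+1+k) * Nat.sqrt (K+1+k) = K+1+k
      then 1/((K+1+k : ℕ):ℝ)^2 else 0 with hB
  -- pointwise bound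
  have hpt : ∀ k : ℕ, klmu (K+1+k) ^ 4 ≤ A k + B k := by
    intro k
    have h2 : 2 ≤ K + 1 + k := by omega
    have := klmu_pow4_le h2
    have hc : (256:ℝ) / ((K+1+k : ℕ):ℝ)^4 = A k := by
      simp only [hA]
      push_cast
      ring
    rw [hc] at this
    exact this
  -- summability
  have base4 : Summable (fun n : ℕ => 1/(n:ℝ)^4) :=
    Real.summable_one_div_nat_pow.mpr (by norm_num)
  have base2 : Summable (fun n : ℕ => 1/(n:ℝ)^2) :=
    Real.summable_one_div_nat_pow.mpr (by norm_num)
  have hshift4 : Summable (fun k : ℕ => 1 / ((K:ℝ) + 1 + k)^4) := by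
    have := (summable_nat_add_iff (K+1)).mpr base4
    apply this.congr
    intro n
    push_cast
    ring_nf
  have hsumA : Summable A := hshift4.mul_left 256
  have hsumB : Summable B := by
    have hshift2 : Summable (fun k : ℕ => 1 / (((K+1+k : ℕ)):ℝ)^2) := by
      have := (summable_nat_add_iff (K+1)).mpr base2
      apply this.congr
      intro n
      push_cast
      ring_nf
    apply Summable.of_nonneg_of_le _ _ hshift2
    · intro k
      simp only [hB]
      split <;> positivity
    · intro k
      simp only [hB]
      split
      · exact le_refl _
      · positivity
  have hsummu : Summable (fun k : ℕ => klmu (K+1+k) ^ 4) := by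
    apply Summable.of_nonneg_of_le _ hpt (hsumA.add hsumB)
    intro k
    positivity
  -- sum bound
  have hsplit : ∑' k : ℕ, klmu (K+1+k) ^ 4 ≤ (∑' k, A k) + (∑' k, B k) := by
    calc ∑' k : ℕ, klmu (K+1+k) ^ 4 ≤ ∑' k, (A k + B k) :=
          Summable.tsum_le_tsum hpt hsummu (hsumA.add hsumB)
      _ = (∑' k, A k) + (∑' k, B k) := Summable.tsum_add hsumA hsumB
  have hKR : (1:ℝ) ≤ K := by exact_mod_cast hK
  have htA : ∑' k, A k ≤ 256 * (1 / (3 * (K:ℝ)^3)) := by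
    rw [hA, tsum_mul_left]
    have := tail_pow4 hK
    nlinarith [this]
  have htB : ∑' k, B k ≤ 1 / (3 * (m:ℝ)^3) := by
    have heq : ∑' k, B k = ∑' j : ℕ, 1 / (((m:ℝ)) + 1 + j)^4 := by
      simp only [hB, hm]
      exact squares_tsum K
    rw [heq]
    exact tail_pow4 hm1
  -- arithmetic
  set r : ℝ := Real.sqrt K with hr
  have hr0 : 0 ≤ r := Real.sqrt_nonneg _
  have hrr : r * r = (K:ℝ) := Real.mul_self_sqrt (by positivity)
  have hr1 : 1 ≤ r := by nlinarith
  have hrK : r ≤ (K:ℝ) := by nlinarith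
  have hmr : r < (m:ℝ) + 1 := by
    have h1 : (K:ℝ) < ((m:ℝ)+1) * ((m:ℝ)+1) := by
      have := Nat.lt_succ_sqrt K
      exact_mod_cast this
    nlinarith
  have hm1R : (1:ℝ) ≤ m := by exact_mod_cast hm1
  have hr2m : r ≤ 2 * m := by linarith
  have hrpos : 0 < r := by linarith
  have hmpos : (0:ℝ) < m := by linarith
  -- final: 256/(3K³) + 1/(3m³) ≤ 88 / r³
  have hfin : 256 * (1 / (3 * (K:ℝ)^3)) + 1 / (3 * (m:ℝ)^3) ≤ 88 * (1 / r^3) := by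
    have hK3 : r^3 ≤ (K:ℝ)^3 := pow_le_pow_left₀ hr0 hrK 3
    have hm3 : r^3 ≤ 8 * (m:ℝ)^3 := by
      nlinarith [mul_nonneg (sub_nonneg.2 hr2m)
        (by positivity : (0:ℝ) ≤ 4*(m:ℝ)^2 + 2*(m:ℝ)*r + r^2)]
    have hA' : 1/(3*(K:ℝ)^3) ≤ 1/(3*r^3) :=
      one_div_le_one_div_of_le (by positivity) (by nlinarith)
    have h1 : 256 * (1/(3*(K:ℝ)^3)) ≤ 256 * (1/(3*r^3)) :=
      mul_le_mul_of_nonneg_left hA' (by norm_num)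
    have h2 : 1/(3*(m:ℝ)^3) ≤ 8 * (1/(3*r^3)) := by
      rw [show (8:ℝ) * (1/(3*r^3)) = 8/(3*r^3) by ring,
        div_le_div_iff₀ (by positivity) (by positivity)]
      nlinarith
    have h3 : 256 * (1/(3*r^3)) + 8 * (1/(3*r^3)) = 88 * (1/r^3) := by
      field_simp
      ring
    linarith
  have hrpow : (K:ℝ) ^ (-(3:ℝ)/2) = 1 / r^3 := by
    have hK0 : (0:ℝ) ≤ K := by positivity
    rw [hr, Real.sqrt_eq_rpow, ← Real.rpow_natCast ((K:ℝ) ^ ((1:ℝ)/2)) 3,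
      ← Real.rpow_mul hK0]
    norm_num
    exact Real.rpow_neg hK0 _
  rw [hrpow]
  calc ∑' k : ℕ, klmu (K+1+k) ^ 4 ≤ (∑' k, A k) + (∑' k, B k) := hsplit
    _ ≤ 256 * (1 / (3 * (K:ℝ)^3)) + 1 / (3 * (m:ℝ)^3) := add_le_add htA htB
    _ ≤ 88 * (1 / r^3) := hfin
end

section
/- Let Ω ∈ ℝ^{p×p} be symmetric positive definite, let α ∈ ℝ^{p×r} and β_⊥ ∈ ℝ^{p×s} (s := p − r) have full column rank, let α_⊥ ∈ ℝ^{p×s} have full column rank with αᵀα_⊥ = 0, and let A₁ ∈ ℝ^{p×p} be such that α_⊥ᵀ A₁ β_⊥ is invertible. Set Ψ := (α_⊥ᵀ A₁ β_⊥)⁻¹, C := β_⊥ Ψ α_⊥ᵀ, M₁ := Ψ α_⊥ᵀ, M₂ := (αᵀα)⁻¹ αᵀ (A₁ C − I_p), Ω₁₁ := M₁ Ω M₁ᵀ and Ω₂₁ := M₂ Ω M₁ᵀ. Then Ω₁₁ is invertible and Ω₂₁ Ω₁₁⁻¹ = (αᵀ Ω⁻¹ α)⁻¹ αᵀ Ω⁻¹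 A₁ β_⊥. (Intermediate matrix identity in the proof of Theorem 7 relating the long-run covariance blocks of a cointegrated VAR.) -/
open Matrix

private lemma auxInj {p n : ℕ} {A : Matrix (Fin p) (Fin n) ℝ} (hA : A.rank = n) :
    Function.Injective A.mulVec := by
  rw [Matrix.mulVec_injective_iff, linearIndependent_iff_card_eq_finrank_span,
    Fintype.card_fin]
  show n = Set.finrank ℝ (Set.range A.col)
  rw [Set.finrank, ← Matrix.rank_eq_finrank_span_cols, hA]

private lemma auxGram {p n : ℕ} {Ω : Matrix (Fin p) (Fin p) ℝ} (hΩ : Ω.PosDef)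
    {B : Matrix (Fin p) (Fin n) ℝ} (hB : Function.Injective B.mulVec) :
    (Bᵀ * Ω * B).PosDef := by
  have hBt : Bᴴ = Bᵀ := by ext i j; simp [Matrix.conjTranspose_apply]
  apply Matrix.PosDef.of_dotProduct_mulVec_pos
  · have h := Matrix.isHermitian_conjTranspose_mul_mul B hΩ.1
    rwa [hBt] at h
  · intro x hx
    have hBx : B *ᵥ x ≠ 0 := by
      intro h
      exact hx (hB (by simpa [Matrix.mulVec_zero] using h))
    have h2 := hΩ.dotProduct_mulVec_pos hBx
    simpa [← Matrix.mulVec_mulVec, Matrix.dotProduct_mulVec, Matrix.vecMul_transpose,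
      Matrix.mul_assoc] using h2

/-- Intermediate matrix identity in the proof of Theorem 7 relating the
long-run covariance blocks of a cointegrated VAR:
`Ω₂₁ Ω₁₁⁻¹ = (αᵀ Ω⁻¹ α)⁻¹ αᵀ Ω⁻¹ A₁ β⊥`. -/
theorem stmt16 {p r s : ℕ} (hps : p = r + s)
    (Ω : Matrix (Fin p) (Fin p) ℝ) (hΩ : Ω.PosDef)
    (α : Matrix (Fin p) (Fin r) ℝ) (hα : α.rank = r)
    (βperp : Matrix (Fin p) (Fin s) ℝ) (hβperp : βperp.rank = s)
    (αperp : Matrix (Fin p) (Fin s) ℝ) (hαperp : αperp.rank = s)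
    (hperp : αᵀ * αperp = 0)
    (A₁ : Matrix (Fin p) (Fin p) ℝ) (hA₁ : IsUnit (αperpᵀ * A₁ * βperp)) :
    let Ψ := (αperpᵀ * A₁ * βperp)⁻¹
    let C := βperp * Ψ * αperpᵀ
    let M₁ := Ψ * αperpᵀ
    let M₂ := (αᵀ * α)⁻¹ * αᵀ * (A₁ * C - 1)
    let Ω₁₁ := M₁ * Ω * M₁ᵀ
    let Ω₂₁ := M₂ * Ω * M₁ᵀ
    IsUnit Ω₁₁ ∧
    Ω₂₁ * Ω₁₁⁻¹ = (αᵀ * Ω⁻¹ * α)⁻¹ * αᵀ * Ω⁻¹ * A₁ * βperp := by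
  intro Ψ C M₁ M₂ Ω₁₁ Ω₂₁
  have hαinj : Function.Injective α.mulVec := auxInj hα
  have hαpinj : Function.Injective αperp.mulVec := auxInj hαperp
  have hKu : IsUnit (αperpᵀ * (Ω * αperp)) := by
    have := (auxGram hΩ hαpinj).isUnit
    rwa [Matrix.mul_assoc] at this
  have hKd : IsUnit (αperpᵀ * (Ω * αperp)).det := (Matrix.isUnit_iff_isUnit_det _).1 hKu
  have haau : IsUnit (αᵀ * α) := by
    have := (auxGram Matrix.PosDef.one hαinj).isUnit
    rwa [Matrix.mul_one] at this
  have haad : IsUnit (αᵀ * α).det := (Matrix.isUnit_iff_isUnit_det _).1 haau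
  have hΩd : IsUnit Ω.det := (Matrix.isUnit_iff_isUnit_det _).1 hΩ.isUnit
  have haΩau : IsUnit (αᵀ * (Ω⁻¹ * α)) := by
    have := (auxGram hΩ.inv hαinj).isUnit
    rwa [Matrix.mul_assoc] at this
  have haΩad : IsUnit (αᵀ * (Ω⁻¹ * α)).det := (Matrix.isUnit_iff_isUnit_det _).1 haΩau
  have hA₁d : IsUnit (αperpᵀ * A₁ * βperp).det := (Matrix.isUnit_iff_isUnit_det _).1 hA₁
  have hΨu : IsUnit Ψ := Matrix.isUnit_nonsing_inv_iff.mpr hA₁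
  have hΨd : IsUnit Ψ.det := (Matrix.isUnit_iff_isUnit_det _).1 hΨu
  have hΨtd : IsUnit Ψᵀ.det := by rwa [Matrix.det_transpose]
  have hΨinveq : Ψ⁻¹ = αperpᵀ * (A₁ * βperp) := by
    have h := Matrix.nonsing_inv_nonsing_inv (αperpᵀ * A₁ * βperp) hA₁d
    show ((αperpᵀ * A₁ * βperp)⁻¹)⁻¹ = _
    rw [h, Matrix.mul_assoc]
  have hperp' : αperpᵀ * α = 0 := by
    have h := congrArg Matrix.transpose hperp
    simpa using h
  have hΩ11eq : Ω₁₁ = Ψ * ((αperpᵀ * (Ω * αperp)) * Ψᵀ) := by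
    show M₁ * Ω * M₁ᵀ = _
    show Ψ * αperpᵀ * Ω * (Ψ * αperpᵀ)ᵀ = _
    rw [Matrix.transpose_mul, Matrix.transpose_transpose]
    simp only [Matrix.mul_assoc]
  have hΩ11u : IsUnit Ω₁₁ := by
    rw [hΩ11eq]
    exact hΨu.mul (hKu.mul ((Matrix.isUnit_transpose Ψ).mpr hΨu))
  have hΩ11inv : Ω₁₁⁻¹ = (Ψᵀ)⁻¹ * ((αperpᵀ * (Ω * αperp))⁻¹ * (αperpᵀ * (A₁ * βperp))) := by
    rw [hΩ11eq, Matrix.mul_inv_rev, Matrix.mul_inv_rev, hΨinveq]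
    simp only [Matrix.mul_assoc]
  -- cancellation rules
  have hc1 : Ψᵀ * ((Ψᵀ)⁻¹ * ((αperpᵀ * (Ω * αperp))⁻¹ * (αperpᵀ * (A₁ * βperp)))) =
      (αperpᵀ * (Ω * αperp))⁻¹ * (αperpᵀ * (A₁ * βperp)) :=
    Matrix.mul_nonsing_inv_cancel_left _ _ hΨtd
  have hc2 : αperpᵀ * (Ω * (αperp * ((αperpᵀ * (Ω * αperp))⁻¹ * (αperpᵀ * (A₁ * βperp))))) =
      αperpᵀ * (A₁ * βperp) := by
    calc αperpᵀ * (Ω * (αperp * ((αperpᵀ * (Ω * αperp))⁻¹ * (αperpᵀ * (A₁ * βperp)))))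
        = (αperpᵀ * (Ω * αperp)) * ((αperpᵀ * (Ω * αperp))⁻¹ * (αperpᵀ * (A₁ * βperp))) := by
          simp only [Matrix.mul_assoc]
      _ = _ := Matrix.mul_nonsing_inv_cancel_left _ _ hKd
  have hc3 : Ψ * (αperpᵀ * (A₁ * βperp)) = 1 := by
    rw [← hΨinveq]
    exact Matrix.mul_nonsing_inv _ hΨd
  have key : Ω₂₁ * Ω₁₁⁻¹ =
      (αᵀ * α)⁻¹ * (αᵀ * (A₁ * βperp)) -
      (αᵀ * α)⁻¹ * (αᵀ * (Ω * (αperp *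
        ((αperpᵀ * (Ω * αperp))⁻¹ * (αperpᵀ * (A₁ * βperp)))))) := by
    rw [hΩ11inv]
    show M₂ * Ω * M₁ᵀ * _ = _
    show (αᵀ * α)⁻¹ * αᵀ * (A₁ * (βperp * Ψ * αperpᵀ) - 1) * Ω * (Ψ * αperpᵀ)ᵀ * _ = _
    rw [Matrix.transpose_mul, Matrix.transpose_transpose]
    simp only [Matrix.sub_mul, Matrix.mul_sub, Matrix.one_mul, Matrix.mul_one,
      Matrix.mul_assoc, hc1, hc2, hc3]
  -- the oblique projection identity
  set E : Matrix (Fin r) (Fin p) ℝ :=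
    (αᵀ * α)⁻¹ * (αᵀ * (1 - Ω * (αperp * ((αperpᵀ * (Ω * αperp))⁻¹ * αperpᵀ)))) with hE
  set F : Matrix (Fin r) (Fin p) ℝ :=
    (αᵀ * (Ω⁻¹ * α))⁻¹ * (αᵀ * Ω⁻¹) with hF
  have hEα : E * α = 1 := by
    have h1 : (αᵀ * α)⁻¹ * (αᵀ * α) = 1 := Matrix.nonsing_inv_mul _ haad
    rw [hE]
    simp only [Matrix.mul_sub, Matrix.sub_mul, Matrix.mul_one, Matrix.one_mul,
      Matrix.mul_assoc, hperp', Matrix.mul_zero, sub_zero, h1]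
  have hEX : E * (Ω * αperp) = 0 := by
    have h2 : (αperpᵀ * (Ω * αperp))⁻¹ * (αperpᵀ * (Ω * αperp)) = 1 :=
      Matrix.nonsing_inv_mul _ hKd
    rw [hE]
    simp only [Matrix.mul_sub, Matrix.sub_mul, Matrix.mul_one, Matrix.one_mul,
      Matrix.mul_assoc, h2, sub_self]
  have hFα : F * α = 1 := by
    have h3 : (αᵀ * (Ω⁻¹ * α))⁻¹ * (αᵀ * (Ω⁻¹ * α)) = 1 := Matrix.nonsing_inv_mul _ haΩad
    rw [hF]
    simp only [Matrix.mul_assoc, h3]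
  have hFX : F * (Ω * αperp) = 0 := by
    have h4 : Ω⁻¹ * (Ω * αperp) = αperp := Matrix.nonsing_inv_mul_cancel_left _ _ hΩd
    rw [hF]
    simp only [Matrix.mul_assoc, h4, hperp, Matrix.mul_zero]
  set e : (Fin r ⊕ Fin s) ≃ Fin p := finSumFinEquiv.trans (finCongr hps.symm) with he
  set G : Matrix (Fin p) (Fin r ⊕ Fin s) ℝ := Matrix.fromCols α (Ω * αperp) with hG
  set G' : Matrix (Fin p) (Fin p) ℝ := G.submatrix id ⇑e.symm with hG'
  have hG'u : IsUnit G' := by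
    rw [← Matrix.mulVec_injective_iff_isUnit]
    have hker : ∀ v, G' *ᵥ v = 0 → v = 0 := by
      intro v hv
      rw [hG', Matrix.submatrix_mulVec_equiv G v id e.symm] at hv
      have hv' : G *ᵥ (v ∘ e) = 0 := by
        funext i
        have := congrFun hv i
        simpa using this
      have hsum : α *ᵥ ((v ∘ e) ∘ Sum.inl) + (Ω * αperp) *ᵥ ((v ∘ e) ∘ Sum.inr) = 0 := by
        rw [← Matrix.fromCols_mulVec_sumElim, Sum.elim_comp_inl_inr, ← hG]
        exact hv'
      have h5 : (αperpᵀ * (Ω * αperp)) *ᵥ ((v ∘ e) ∘ Sum.inr) = 0 := by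
        have h := congrArg (fun w => αperpᵀ *ᵥ w) hsum
        simpa [Matrix.mulVec_add, Matrix.mulVec_mulVec, hperp', Matrix.zero_mulVec,
          Matrix.mulVec_zero] using h
      have hu₂ : (v ∘ e) ∘ Sum.inr = 0 := by
        apply Matrix.mulVec_injective_iff_isUnit.mpr hKu
        rw [h5, Matrix.mulVec_zero]
      have hu₁ : (v ∘ e) ∘ Sum.inl = 0 := by
        apply hαinj
        rw [Matrix.mulVec_zero]
        have h := hsum
        rw [hu₂, Matrix.mulVec_zero, add_zero] at h
        exact h
      funext i
      have h6 : ∀ j, (v ∘ e) j = 0 := by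
        intro j
        cases j with
        | inl a => exact congrFun hu₁ a
        | inr b => exact congrFun hu₂ b
      have := h6 (e.symm i)
      simpa using this
    intro x y hxy
    have h7 : G' *ᵥ (x - y) = 0 := by rw [Matrix.mulVec_sub, hxy, sub_self]
    exact sub_eq_zero.mp (hker _ h7)
  have hG'd : IsUnit G'.det := (Matrix.isUnit_iff_isUnit_det _).1 hG'u
  have hEF : E = F := by
    have hDG : (E - F) * G' = 0 := by
      have h6 : (E - F) * G' = ((E - F) * G).submatrix id ⇑e.symm := by
        rw [hG']
        ext i j
        simp [Matrix.mul_apply, Matrix.submatrix_apply]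
      rw [h6, hG, Matrix.mul_fromCols, Matrix.sub_mul, hEα, hFα, sub_self,
        Matrix.sub_mul, hEX, hFX, sub_self, Matrix.fromCols_zero]
      simp
    have h8 := congrArg (fun X => X * G'⁻¹) hDG
    simp only [Matrix.zero_mul] at h8
    rw [Matrix.mul_nonsing_inv_cancel_right _ _ hG'd] at h8
    exact sub_eq_zero.mp h8
  refine ⟨hΩ11u, ?_⟩
  have hEmul : E * (A₁ * βperp) =
      (αᵀ * α)⁻¹ * (αᵀ * (A₁ * βperp)) -
      (αᵀ * α)⁻¹ * (αᵀ * (Ω * (αperp *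
        ((αperpᵀ * (Ω * αperp))⁻¹ * (αperpᵀ * (A₁ * βperp)))))) := by
    rw [hE]
    simp only [Matrix.mul_sub, Matrix.sub_mul, Matrix.one_mul, Matrix.mul_one,
      Matrix.mul_assoc]
  have hFmul : F * (A₁ * βperp) = (αᵀ * Ω⁻¹ * α)⁻¹ * αᵀ * Ω⁻¹ * A₁ * βperp := by
    rw [hF]
    simp only [Matrix.mul_assoc]
  rw [key, ← hEmul, hEF, hFmul]
end

section
/- Let Ω ∈ ℝ^{p×p} be symmetric positive definite, let α ∈ ℝ^{p×r} and β_⊥ ∈ ℝ^{p×s} (s := p − r) have full column rank, let α_⊥ ∈ ℝ^{p×s} have full column rank with αᵀα_⊥ = 0, and let A₁ ∈ ℝ^{p×p} be such that α_⊥ᵀ A₁ β_⊥ is invertible. Set Ψ := (α_⊥ᵀ A₁ β_⊥)⁻¹, C := β_⊥ Ψ α_⊥ᵀ, M₁ := Ψ α_⊥ᵀ, M₂ := (αᵀα)⁻¹ αᵀ (A₁ C − I_p), Ω₁₁ := M₁ Ω M₁ᵀ and Ω₂₁ := M₂ Ω M₁ᵀ. Then α_⊥ᵀ (A₁ C − I_p)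 = 0 and M₂ − Ω₂₁ Ω₁₁⁻¹ M₁ = −(αᵀ Ω⁻¹ α)⁻¹ αᵀ Ω⁻¹. (Matrix identity underlying the equality W_{2.1} = −V_α in the proof of Theorem 7, which shows the ICC asymptotic distribution coincides with the ML distribution in the VAR case.) -/
open Matrix

/-- cancel `A * B = 1` inside a right-associated product -/
private lemma mulcancel {l m n : Type*} [Fintype m] [Fintype l] [DecidableEq l]
    (A : Matrix l m ℝ) (B : Matrix m l ℝ) (C : Matrix l n ℝ) (h : A * B = 1) :
    A * (B * C) = C := by
  rw [← Matrix.mul_assoc, h, Matrix.one_mul]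

/-- full column rank implies injective `mulVecLin` -/
private lemma inj_of_rank {m n : ℕ} (A : Matrix (Fin m) (Fin n) ℝ)
    (hA : A.rank = n) : Function.Injective A.mulVecLin := by
  rw [← LinearMap.ker_eq_bot]
  have h := A.mulVecLin.finrank_range_add_finrank_ker
  rw [Module.finrank_fintype_fun_eq_card, Fintype.card_fin] at h
  have hr : Matrix.rank A = Module.finrank ℝ (LinearMap.range A.mulVecLin) := rfl
  have h0 : Module.finrank ℝ (LinearMap.ker A.mulVecLin) = 0 := by omega
  exact Submodule.finrank_eq_zero.mp h0

/-- `Bᵀ Ω B` is positive definite when `Ω` is and `B` is injective. -/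
private lemma posdef_conj {m n : ℕ} {Ω : Matrix (Fin m) (Fin m) ℝ} (hΩ : Ω.PosDef)
    {B : Matrix (Fin m) (Fin n) ℝ} (hB : Function.Injective B.mulVecLin) :
    (Bᵀ * Ω * B).PosDef := by
  have hBt : Bᵀ = Bᴴ := by ext i j; simp [conjTranspose_apply]
  refine Matrix.PosDef.of_dotProduct_mulVec_pos ?_ ?_
  · rw [hBt]; exact isHermitian_conjTranspose_mul_mul B hΩ.1
  · intro x hx
    have hBx : B *ᵥ x ≠ 0 := by
      intro h
      apply hx
      apply hB
      simpa [Matrix.mulVecLin_apply] using h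
    have := hΩ.dotProduct_mulVec_pos hBx
    rw [hBt]
    simpa only [star_mulVec, dotProduct_mulVec, vecMul_vecMul] using this

private lemma posdef_gram {m n : ℕ} {B : Matrix (Fin m) (Fin n) ℝ}
    (hB : Function.Injective B.mulVecLin) : (Bᵀ * B).PosDef := by
  have := posdef_conj (Matrix.PosDef.one (n := Fin m) (R := ℝ)) hB
  rwa [Matrix.mul_one] at this

/-- The key projection-decomposition identity. -/
private lemma key_s17 {p r s : ℕ} (hps : p = r + s)
    (Ω : Matrix (Fin p) (Fin p) ℝ) (hΩ : Ω.PosDef)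
    (α : Matrix (Fin p) (Fin r) ℝ) (hα : α.rank = r)
    (αperp : Matrix (Fin p) (Fin s) ℝ) (hαperp : αperp.rank = s)
    (hperp : αᵀ * αperp = 0) :
    αperp * (αperpᵀ * Ω * αperp)⁻¹ * αperpᵀ
      = Ω⁻¹ - Ω⁻¹ * α * (αᵀ * Ω⁻¹ * α)⁻¹ * (αᵀ * Ω⁻¹) := by
  have hαi := inj_of_rank α hα
  have hαpi := inj_of_rank αperp hαperp
  have hΩdet : IsUnit Ω.det := (Matrix.isUnit_iff_isUnit_det Ω).mp hΩ.isUnit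
  have hΩinv : (Ω⁻¹).PosDef := hΩ.inv
  set D := αperpᵀ * Ω * αperp with hD
  set E := αᵀ * Ω⁻¹ * α with hE
  have hDpd : D.PosDef := posdef_conj hΩ hαpi
  have hEpd : E.PosDef := posdef_conj hΩinv hαi
  have hDdet : IsUnit D.det := (Matrix.isUnit_iff_isUnit_det D).mp hDpd.isUnit
  have hEdet : IsUnit E.det := (Matrix.isUnit_iff_isUnit_det E).mp hEpd.isUnit
  have hDinv : D⁻¹ * D = 1 := Matrix.nonsing_inv_mul D hDdet
  have hEinv : E⁻¹ * E = 1 := Matrix.nonsing_inv_mul E hEdet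
  have hΩl : Ω⁻¹ * Ω = 1 := Matrix.nonsing_inv_mul Ω hΩdet
  have hΩr : Ω * Ω⁻¹ = 1 := Matrix.mul_nonsing_inv Ω hΩdet
  have hperp' : αperpᵀ * α = 0 := by
    have := congrArg Matrix.transpose hperp
    simpa [Matrix.transpose_mul] using this
  -- the matrix F
  set F := Ω - Ω * αperp * D⁻¹ * (αperpᵀ * Ω) - α * E⁻¹ * αᵀ with hF
  have hF1 : F * αperp = 0 := by
    have h1 : (Ω * αperp * D⁻¹ * (αperpᵀ * Ω)) * αperp = Ω * αperp := by
      calc (Ω * αperp * D⁻¹ * (αperpᵀ * Ω)) * αperp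
          = Ω * αperp * (D⁻¹ * D) := by
            simp only [hD, Matrix.mul_assoc]
        _ = Ω * αperp := by rw [hDinv, Matrix.mul_one]
    have h2 : (α * E⁻¹ * αᵀ) * αperp = 0 := by
      calc (α * E⁻¹ * αᵀ) * αperp = α * E⁻¹ * (αᵀ * αperp) := by
            simp only [Matrix.mul_assoc]
        _ = 0 := by rw [hperp, Matrix.mul_zero]
    rw [hF, Matrix.sub_mul, Matrix.sub_mul, h1, h2, sub_self, zero_sub, neg_zero]
  have hF2 : F * (Ω⁻¹ * α) = 0 := by
    have h1 : Ω * (Ω⁻¹ * α) = α := mulcancel Ω Ω⁻¹ α hΩr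
    have h2 : (Ω * αperp * D⁻¹ * (αperpᵀ * Ω)) * (Ω⁻¹ * α) = 0 := by
      calc (Ω * αperp * D⁻¹ * (αperpᵀ * Ω)) * (Ω⁻¹ * α)
          = Ω * αperp * D⁻¹ * (αperpᵀ * (Ω * (Ω⁻¹ * α))) := by
            simp only [Matrix.mul_assoc]
        _ = Ω * αperp * D⁻¹ * (αperpᵀ * α) := by rw [h1]
        _ = 0 := by rw [hperp', Matrix.mul_zero]
    have h3 : (α * E⁻¹ * αᵀ) * (Ω⁻¹ * α) = α := by
      calc (α * E⁻¹ * αᵀ) * (Ω⁻¹ * α) = α * (E⁻¹ * E) := by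
            simp only [hE, Matrix.mul_assoc]
        _ = α := by rw [hEinv, Matrix.mul_one]
    rw [hF, Matrix.sub_mul, Matrix.sub_mul, h1, h2, h3, sub_zero, sub_self]
  -- surjectivity of the combined map
  have hφ : Function.Surjective
      (LinearMap.coprod αperp.mulVecLin (Ω⁻¹ * α).mulVecLin) := by
    have hinj : Function.Injective
        (LinearMap.coprod αperp.mulVecLin (Ω⁻¹ * α).mulVecLin) := by
      rw [← LinearMap.ker_eq_bot, Submodule.eq_bot_iff]
      rintro ⟨u, v⟩ huv
      rw [LinearMap.mem_ker, LinearMap.coprod_apply] at huv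
      simp only [Matrix.mulVecLin_apply] at huv
      have hv : E *ᵥ v = 0 := by
        have := congrArg (fun w => αᵀ *ᵥ w) huv
        simp only [Matrix.mulVec_add, Matrix.mulVec_mulVec, Matrix.mulVec_zero] at this
        rw [hperp] at this
        simpa [hE, Matrix.mul_assoc, Matrix.zero_mulVec] using this
      have hv0 : v = 0 := by
        have hEu : Function.Injective E.mulVec :=
          Matrix.mulVec_injective_iff_isUnit.mpr hEpd.isUnit
        have := hEu (a₁ := v) (a₂ := 0) (by simpa [Matrix.mulVec_zero] using hv)
        exact this
      have hu0 : u = 0 := by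
        apply hαpi
        rw [hv0] at huv
        simpa [Matrix.mulVecLin_apply, Matrix.mulVec_zero] using huv
      simp [hv0, hu0]
    have hfr : Module.finrank ℝ ((Fin s → ℝ) × (Fin r → ℝ))
        = Module.finrank ℝ (Fin p → ℝ) := by
      simp [Module.finrank_fintype_fun_eq_card, hps]
      omega
    exact (LinearMap.injective_iff_surjective_of_finrank_eq_finrank hfr).mp hinj
  -- F = 0
  have hF0 : F = 0 := by
    ext i j
    have hx := hφ (Pi.single j 1)
    obtain ⟨⟨u, v⟩, huv⟩ := hx
    rw [LinearMap.coprod_apply] at huv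
    simp only [Matrix.mulVecLin_apply] at huv
    have : F *ᵥ Pi.single j 1 = 0 := by
      rw [← huv, Matrix.mulVec_add, Matrix.mulVec_mulVec, Matrix.mulVec_mulVec, hF1]
      have : F * (Ω⁻¹ * α) = 0 := hF2
      rw [← Matrix.mul_assoc] at this ⊢
      rw [this, Matrix.zero_mulVec, Matrix.zero_mulVec, add_zero]
    have := congrFun this i
    simpa [Matrix.mulVec_single] using this
  -- conclude
  have hgoal := congrArg (fun M => Ω⁻¹ * M * Ω⁻¹) hF0
  simp only [hF, Matrix.mul_zero, Matrix.zero_mul] at hgoal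
  have hexp : Ω⁻¹ * (Ω - Ω * αperp * D⁻¹ * (αperpᵀ * Ω) - α * E⁻¹ * αᵀ) * Ω⁻¹
      = 1 * Ω⁻¹ - αperp * D⁻¹ * αperpᵀ * 1 - Ω⁻¹ * α * E⁻¹ * (αᵀ * Ω⁻¹) := by
    rw [Matrix.mul_sub, Matrix.mul_sub, Matrix.sub_mul, Matrix.sub_mul, hΩl]
    congr 1
    · congr 1
      calc Ω⁻¹ * (Ω * αperp * D⁻¹ * (αperpᵀ * Ω)) * Ω⁻¹
          = Ω⁻¹ * (Ω * (αperp * (D⁻¹ * (αperpᵀ * (Ω * Ω⁻¹))))) := by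
            simp only [Matrix.mul_assoc]
        _ = αperp * (D⁻¹ * (αperpᵀ * (Ω * Ω⁻¹))) :=
            mulcancel Ω⁻¹ Ω _ hΩl
        _ = αperp * D⁻¹ * αperpᵀ * 1 := by
            rw [hΩr, Matrix.mul_one]
            simp only [Matrix.mul_assoc, Matrix.mul_one]
    · simp only [Matrix.mul_assoc]
  rw [hexp] at hgoal
  rw [Matrix.one_mul, Matrix.mul_one] at hgoal
  have h2 := sub_eq_zero.mp hgoal
  rw [← h2]
  abel

/-- Matrix identity underlying the equality `W_{2.1} = −V_α` in the proof of
Theorem 7: `α⊥ᵀ(A₁C − I) = 0` and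
`M₂ − Ω₂₁ Ω₁₁⁻¹ M₁ = −(αᵀ Ω⁻¹ α)⁻¹ αᵀ Ω⁻¹`. -/
theorem stmt17 {p r s : ℕ} (hps : p = r + s)
    (Ω : Matrix (Fin p) (Fin p) ℝ) (hΩ : Ω.PosDef)
    (α : Matrix (Fin p) (Fin r) ℝ) (hα : α.rank = r)
    (βperp : Matrix (Fin p) (Fin s) ℝ) (hβperp : βperp.rank = s)
    (αperp : Matrix (Fin p) (Fin s) ℝ) (hαperp : αperp.rank = s)
    (hperp : αᵀ * αperp = 0)
    (A₁ : Matrix (Fin p) (Fin p) ℝ) (hA₁ : IsUnit (αperpᵀ * A₁ * βperp)) :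
    let Ψ := (αperpᵀ * A₁ * βperp)⁻¹
    let C := βperp * Ψ * αperpᵀ
    let M₁ := Ψ * αperpᵀ
    let M₂ := (αᵀ * α)⁻¹ * αᵀ * (A₁ * C - 1)
    let Ω₁₁ := M₁ * Ω * M₁ᵀ
    let Ω₂₁ := M₂ * Ω * M₁ᵀ
    αperpᵀ * (A₁ * C - 1) = 0 ∧
    M₂ - Ω₂₁ * Ω₁₁⁻¹ * M₁ = -((αᵀ * Ω⁻¹ * α)⁻¹ * αᵀ * Ω⁻¹) := by
  intro Ψ C M₁ M₂ Ω₁₁ Ω₂₁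
  set X := αperpᵀ * A₁ * βperp with hXdef
  have hXdet : IsUnit X.det := (Matrix.isUnit_iff_isUnit_det X).mp hA₁
  have hΨX : Ψ * X = 1 := Matrix.nonsing_inv_mul X hXdet
  have hXΨ : X * Ψ = 1 := Matrix.mul_nonsing_inv X hXdet
  have hperp' : αperpᵀ * α = 0 := by
    have := congrArg Matrix.transpose hperp
    simpa [Matrix.transpose_mul] using this
  -- claim 1
  have hclaim1 : αperpᵀ * (A₁ * C - 1) = 0 := by
    have : αperpᵀ * (A₁ * C) = αperpᵀ := by
      show αperpᵀ * (A₁ * (βperp * Ψ * αperpᵀ)) = αperpᵀ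
      calc αperpᵀ * (A₁ * (βperp * Ψ * αperpᵀ))
          = (αperpᵀ * A₁ * βperp) * (Ψ * αperpᵀ) := by simp only [Matrix.mul_assoc]
        _ = X * (Ψ * αperpᵀ) := by rw [hXdef]
        _ = αperpᵀ := mulcancel X Ψ αperpᵀ hXΨ
    rw [Matrix.mul_sub, this, Matrix.mul_one, sub_self]
  refine ⟨hclaim1, ?_⟩
  -- setup
  have hαi := inj_of_rank α hα
  have hαpi := inj_of_rank αperp hαperp
  have hΩdet : IsUnit Ω.det := (Matrix.isUnit_iff_isUnit_det Ω).mp hΩ.isUnit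
  have hΩr : Ω * Ω⁻¹ = 1 := Matrix.mul_nonsing_inv Ω hΩdet
  set D := αperpᵀ * Ω * αperp with hDdef
  set E := αᵀ * Ω⁻¹ * α with hEdef
  set G := αᵀ * α with hGdef
  have hGpd : G.PosDef := posdef_gram hαi
  have hGinv : G⁻¹ * G = 1 := Matrix.nonsing_inv_mul G ((Matrix.isUnit_iff_isUnit_det G).mp hGpd.isUnit)
  -- M₂ * α = -1
  have hM2α : M₂ * α = -1 := by
    have hCα : C * α = 0 := by
      show βperp * Ψ * αperpᵀ * α = 0
      rw [Matrix.mul_assoc, hperp', Matrix.mul_zero]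
    have : (A₁ * C - 1) * α = -α := by
      rw [Matrix.sub_mul, Matrix.one_mul, Matrix.mul_assoc, hCα, Matrix.mul_zero,
        zero_sub]
    have h3 : (αᵀ * α)⁻¹ * αᵀ * α = 1 := by
      rw [Matrix.mul_assoc]
      exact hGinv
    show (αᵀ * α)⁻¹ * αᵀ * (A₁ * C - 1) * α = -1
    rw [Matrix.mul_assoc ((αᵀ * α)⁻¹ * αᵀ), this, Matrix.mul_neg, h3]
  -- Ψ invertible facts
  have hΨdet : IsUnit Ψ.det := by
    show IsUnit (X⁻¹).det
    rw [Matrix.det_nonsing_inv, isUnit_ringInverse]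
    exact hXdet
  have hΨtdet : IsUnit (Ψᵀ).det := by rwa [Matrix.det_transpose]
  -- M₁ᵀ Ω₁₁⁻¹ M₁ = αperp D⁻¹ αperpᵀ
  have hM1t : M₁ᵀ = αperp * Ψᵀ := by
    show (Ψ * αperpᵀ)ᵀ = αperp * Ψᵀ
    rw [Matrix.transpose_mul, Matrix.transpose_transpose]
  have hΩ11 : Ω₁₁ = Ψ * D * Ψᵀ := by
    show Ψ * αperpᵀ * Ω * M₁ᵀ = Ψ * D * Ψᵀ
    rw [hM1t, hDdef]
    simp only [Matrix.mul_assoc]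
  have hΩ11inv : Ω₁₁⁻¹ = Ψᵀ⁻¹ * (D⁻¹ * Ψ⁻¹) := by
    rw [hΩ11, Matrix.mul_inv_rev, Matrix.mul_inv_rev]
  have hJ : M₁ᵀ * Ω₁₁⁻¹ * M₁ = αperp * D⁻¹ * αperpᵀ := by
    rw [hM1t, hΩ11inv]
    show αperp * Ψᵀ * (Ψᵀ⁻¹ * (D⁻¹ * Ψ⁻¹)) * (Ψ * αperpᵀ) = αperp * D⁻¹ * αperpᵀ
    have h1 : Ψᵀ * (Ψᵀ⁻¹ * (D⁻¹ * Ψ⁻¹)) = D⁻¹ * Ψ⁻¹ :=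
      mulcancel Ψᵀ Ψᵀ⁻¹ _ (Matrix.mul_nonsing_inv Ψᵀ hΨtdet)
    rw [Matrix.mul_assoc αperp Ψᵀ _, h1]
    have h2 : Ψ⁻¹ * (Ψ * αperpᵀ) = αperpᵀ :=
      mulcancel Ψ⁻¹ Ψ _ (Matrix.nonsing_inv_mul Ψ hΨdet)
    calc αperp * (D⁻¹ * Ψ⁻¹) * (Ψ * αperpᵀ)
        = αperp * (D⁻¹ * (Ψ⁻¹ * (Ψ * αperpᵀ))) := by simp only [Matrix.mul_assoc]
      _ = αperp * D⁻¹ * αperpᵀ := by rw [h2, Matrix.mul_assoc]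
  have hkey := key_s17 hps Ω hΩ α hα αperp hαperp hperp
  rw [← hDdef, ← hEdef] at hkey
  -- main computation
  have hmain : Ω₂₁ * Ω₁₁⁻¹ * M₁ = M₂ + E⁻¹ * (αᵀ * Ω⁻¹) := by
    have h0 : Ω₂₁ * Ω₁₁⁻¹ * M₁ = M₂ * Ω * (M₁ᵀ * Ω₁₁⁻¹ * M₁) := by
      show M₂ * Ω * M₁ᵀ * Ω₁₁⁻¹ * M₁ = M₂ * Ω * (M₁ᵀ * Ω₁₁⁻¹ * M₁)
      simp only [Matrix.mul_assoc]
    rw [h0, hJ, hkey]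
    rw [Matrix.mul_sub]
    have h1 : M₂ * Ω * Ω⁻¹ = M₂ := by
      rw [Matrix.mul_assoc, hΩr, Matrix.mul_one]
    have h2 : M₂ * Ω * (Ω⁻¹ * α * E⁻¹ * (αᵀ * Ω⁻¹)) = -(E⁻¹ * (αᵀ * Ω⁻¹)) := by
      have ha : Ω * (Ω⁻¹ * α * E⁻¹ * (αᵀ * Ω⁻¹)) = α * E⁻¹ * (αᵀ * Ω⁻¹) := by
        calc Ω * (Ω⁻¹ * α * E⁻¹ * (αᵀ * Ω⁻¹))
            = Ω * (Ω⁻¹ * (α * E⁻¹ * (αᵀ * Ω⁻¹))) := by simp only [Matrix.mul_assoc]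
          _ = α * E⁻¹ * (αᵀ * Ω⁻¹) := mulcancel Ω Ω⁻¹ _ hΩr
      rw [Matrix.mul_assoc M₂ Ω, ha]
      calc M₂ * (α * E⁻¹ * (αᵀ * Ω⁻¹))
          = (M₂ * α) * (E⁻¹ * (αᵀ * Ω⁻¹)) := by simp only [Matrix.mul_assoc]
        _ = -(E⁻¹ * (αᵀ * Ω⁻¹)) := by rw [hM2α, Matrix.neg_mul, Matrix.one_mul]
    rw [h1, h2, sub_neg_eq_add]
  rw [hmain]
  have : (αᵀ * Ω⁻¹ * α)⁻¹ * αᵀ * Ω⁻¹ = E⁻¹ * (αᵀ * Ω⁻¹) := by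
    rw [← hEdef, Matrix.mul_assoc]
  rw [this]
  abel
end
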